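/- arXiv:2412.18502 — 5 statements merged into one kernel-verified Lean document; each statement's English description precedes it below -/
import Mathlib

section
/- Suppose V admits a stream function H. Then every orbit ξ of V belongs to at least one of the following categories: (1) ξ is a closed orbit; (2) ξ is a non-contractible periodic orbit; (3) ξ is asymptotic to Γ, i.e. lim_{t→±∞} dist(ξ(t),Γ) = 0. -/
open MeasureTheory Filter Topology Set Metric Bornology

noncomputable section

/-- The plane `ℝ²` with the Euclidean norm. -/
abbrev E2 : Type := EuclideanSpace ℝ (Fin 2)

/-- The vector of `ℝ²` with integer coordinates `k`. -/
def intVec (k : Fin 2 → ℤ) : E2 := WithLp.toLp 2 (fun i => (k i : ℝ))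

/-- `ℤ²`-periodicity of a map on `ℝ²`. -/
def ZPeriodic {α : Type*} (V : E2 → α) : Prop :=
  ∀ (x : E2) (k : Fin 2 → ℤ), V (x + intVec k) = V x

/-- The stagnation set `Γ = {x | V x = 0}`. -/
def Stag (V : E2 → E2) : Set E2 := {x | V x = 0}

/-- `ξ` is an orbit of the flow `V`. -/
def IsOrbit (V : E2 → E2) (ξ : ℝ → E2) : Prop := ∀ t : ℝ, HasDerivAt ξ (V (ξ t)) t

/-- `ξ` is the orbit of `V` passing through `x` at time `0`. -/
def IsOrbitThrough (V : E2 → E2) (ξ : ℝ → E2) (x : E2) : Prop := IsOrbit V ξ ∧ ξ 0 = x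

/-- closed orbit. -/
def IsClosedOrbit (V : E2 → E2) (ξ : ℝ → E2) : Prop :=
  IsOrbit V ξ ∧ ∃ T > (0:ℝ), ξ T = ξ 0

/-- non-contractible periodic orbit: `ξ T − ξ 0 ∈ ℤ² ∖ {0}` for some `T > 0`. -/
def IsNoncontractibleOrbit (V : E2 → E2) (ξ : ℝ → E2) : Prop :=
  IsOrbit V ξ ∧ ∃ T > (0:ℝ), ∃ k : Fin 2 → ℤ, k ≠ 0 ∧ ξ T - ξ 0 = intVec k

/-- an orbit asymptotic to the stagnation set: `dist(ξ t, Γ) → 0` as `t → ±∞`. -/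
def AsympToStag (V : E2 → E2) (ξ : ℝ → E2) : Prop :=
  Tendsto (fun t => infDist (ξ t) (Stag V)) atTop (nhds 0) ∧
  Tendsto (fun t => infDist (ξ t) (Stag V)) atBot (nhds 0)

/-- the closed region enclosed by a curve with image `J`: the complement of the
unbounded connected component of `ℝ² ∖ J`. -/
def encl (J : Set E2) : Set E2 :=
  J ∪ {x | x ∉ J ∧ IsBounded (connectedComponentIn Jᶜ x)}

/-- the swirls (closed orbits) of `V` have size uniformly bounded by `M`. -/
def SwirlBound (V : E2 → E2) (M : ℝ) : Prop :=
  ∀ ξ : ℝ → E2, IsClosedOrbit V ξ → diam (range ξ) ≤ M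

/-- a set is invariant under the flow of `V`. -/
def FlowInvariant (V : E2 → E2) (E : Set E2) : Prop :=
  ∀ x ∈ E, ∀ ξ : ℝ → E2, IsOrbitThrough V ξ x → range ξ ⊆ E

/-- a cell of the flow `V`. -/
def IsCell (V : E2 → E2) (S : Set E2) : Prop :=
  IsClosed S ∧ ∃ ξ : ℕ → ℝ → E2,
    (∀ m, IsClosedOrbit V (ξ m)) ∧
    (∀ m, encl (range (ξ m)) ⊂ encl (range (ξ (m+1)))) ∧
    S = closure (⋃ m, encl (range (ξ m))) ∧
    (frontier S ∩ Stag V).Nonempty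

/-- a maximal cell. -/
def IsMaximalCell (V : E2 → E2) (S : Set E2) : Prop :=
  IsCell V S ∧ ∀ S' : Set E2, IsCell V S' → ¬ S ⊂ S'

/-- `H` is a stream function for `V`: `ℤ²`-periodic, differentiable with Lipschitz
gradient, and `V = (−H_{x₂}, H_{x₁})`. -/
def IsStreamFunction (V : E2 → E2) (H : E2 → ℝ) : Prop :=
  ZPeriodic H ∧ Differentiable ℝ H ∧
  (∃ L : NNReal, LipschitzWith L (fun x => gradient H x)) ∧
  (∀ x : E2, V x 0 = - fderiv ℝ H x (EuclideanSpace.single 1 1) ∧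
             V x 1 = fderiv ℝ H x (EuclideanSpace.single 0 1))

/-- an `A`-admissible control path on `[0,T]`: Lipschitz with
`|γ' + A·V(γ)| ≤ 1` a.e. on `[0,T]`. -/
def IsAdmissible (V : E2 → E2) (A T : ℝ) (γ : ℝ → E2) : Prop :=
  (∃ L : NNReal, LipschitzOnWith L γ (Icc 0 T)) ∧
  ∀ᵐ t ∂(volume : Measure ℝ), t ∈ Icc (0:ℝ) T →
    ∃ g : E2, HasDerivAt γ g t ∧ ‖g + A • V (γ t)‖ ≤ 1

/-- turbulent flame speed via the control representation of the inviscid G-equation. -/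
def sT (V : E2 → E2) (p : E2) (A : ℝ) : ℝ :=
  limsup (fun t : ℝ =>
    (1 / t) * sSup {r : ℝ | ∃ γ : ℝ → E2, IsAdmissible V A t γ ∧ γ 0 = 0 ∧
      r = - (inner ℝ p (γ t) : ℝ)}) atTop

/-- `β₊` associated to the transversal family `η`. -/
def betaPlus (H : E2 → ℝ) (η : ℝ → ℝ → E2) : ℝ :=
  sInf ((fun t => H (η t 1)) '' Icc (-1:ℝ) 1)

/-- `β₋` associated to the transversal family `η`. -/
def betaMinus (H : E2 → ℝ) (η : ℝ → ℝ → E2) : ℝ :=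
  sSup ((fun t => H (η t (-1))) '' Icc (-1:ℝ) 1)

/-- `U_x = Φ((−1,1)×(β₋,β₊))`. -/
def Uset (Φ : ℝ → ℝ → E2) (a b : ℝ) : Set E2 := image2 Φ (Ioo (-1:ℝ) 1) (Ioo a b)

/-- the transversal family `η` through the orbit `ξ`: `η t` is the gradient flow
of `H` with `η t 0 = ξ t`. -/
def IsTransversalFamily (H : E2 → ℝ) (ξ : ℝ → E2) (η : ℝ → ℝ → E2) : Prop :=
  ∀ t : ℝ, η t 0 = ξ t ∧ ∀ s : ℝ, HasDerivAt (η t) (gradient H (η t s)) s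

/-- The defining property of the local coordinate map `Φ` on a rectangle
`T × B`: `Φ t β` is the (unique) point of the transversal curve `η t` at level
`H = β`. -/
def IsPhiMap (H : E2 → ℝ) (η : ℝ → ℝ → E2) (Φ : ℝ → ℝ → E2) (T B : Set ℝ) : Prop :=
  ∀ t ∈ T, ∀ β ∈ B, H (Φ t β) = β ∧ ∃ s : ℝ, Φ t β = η t s

/-!
If `ξ` is not asymptotic to `Γ`, it comes back at arbitrarily large times `|t|` to points at
distance `≥ ε` from `Γ`. Reduced modulo `ℤ²`, these points accumulate at some `x₀` with
`V x₀ ≠ 0`. The short segment through `x₀` orthogonal to `V x₀` is a transversal section: every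
orbit passing close enough to `x₀` crosses it within a bounded time, and `H` is injective on it,
because `∇H x₀` is parallel to the segment. Two `ℤ²`-translates of `ξ` crossing it at times
`s₁ ≠ s₂` lie on the same level set of `H`, hence cross at the same point, so
`ξ s₂ - ξ s₁ ∈ ℤ²`. By uniqueness of orbits, `ξ` is then periodic modulo `ℤ²`: closed if the
shift is `0`, non-contractible otherwise.
-/

open scoped RealInnerProductSpace

section Gradient

variable {F : Type*} [NormedAddCommGroup F] [InnerProductSpace ℝ F] [CompleteSpace F]

-- Rolle's theorem on the segment gives a point where `∇H` is orthogonal to `y₂ - y₁`.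
theorem abs_inner_gradient_sub_le_of_eq {H : F → ℝ} (hH : Differentiable ℝ H) {L : NNReal}
    (hL : LipschitzWith L (gradient H)) {x y₁ y₂ : F} {r : ℝ}
    (h₁ : y₁ ∈ closedBall x r) (h₂ : y₂ ∈ closedBall x r) (hHeq : H y₁ = H y₂) :
    |⟪gradient H x, y₂ - y₁⟫| ≤ L * r * ‖y₂ - y₁‖ := by
  set w := y₂ - y₁
  have hline (τ : ℝ) :
      HasDerivAt (fun τ : ℝ => H (y₁ + τ • w)) ⟪gradient H (y₁ + τ • w), w⟫ τ := by
    rw [inner_gradient_left]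
    exact (hH _).hasFDerivAt.comp_hasDerivAt τ
      ((((hasDerivAt_id τ).smul_const w).const_add y₁).congr_deriv (one_smul ℝ w))
  obtain ⟨τ, hτ, hzero⟩ := exists_hasDerivAt_eq_zero one_pos
    (fun τ _ => (hline τ).continuousAt.continuousWithinAt)
    (by simp [w, hHeq]) (fun τ _ => hline τ)
  have hz : y₁ + τ • w ∈ closedBall x r := by
    refine (convex_closedBall x r).segment_subset h₁ h₂ ?_
    rw [segment_eq_image']
    exact ⟨τ, Ioo_subset_Icc_self hτ, rfl⟩
  calc |⟪gradient H x, w⟫| = |⟪gradient H x - gradient H (y₁ + τ • w), w⟫| := by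
        rw [inner_sub_left, hzero, sub_zero]
    _ ≤ ‖gradient H x - gradient H (y₁ + τ • w)‖ * ‖w‖ := abs_real_inner_le_norm _ _
    _ ≤ L * r * ‖w‖ := by
        gcongr
        rw [← dist_eq_norm]
        exact (hL.dist_le_mul _ _).trans
          (mul_le_mul_of_nonneg_left (mem_closedBall'.1 hz) L.2)

end Gradient

theorem exists_mem_Icc_eq_zero_of_le_deriv {g g' : ℝ → ℝ} {t₀ Δ c : ℝ}
    (hΔ : 0 ≤ Δ) (hg : ∀ t ∈ Icc (t₀ - Δ) (t₀ + Δ), HasDerivAt g (g' t) t)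
    (hc : ∀ t ∈ Icc (t₀ - Δ) (t₀ + Δ), c ≤ g' t) (h₀ : |g t₀| ≤ c * Δ) :
    ∃ s ∈ Icc (t₀ - Δ) (t₀ + Δ), g s = 0 := by
  have hmem : t₀ ∈ Icc (t₀ - Δ) (t₀ + Δ) := ⟨by linarith, by linarith⟩
  have hcont : ContinuousOn g (Icc (t₀ - Δ) (t₀ + Δ)) :=
    fun t ht => (hg t ht).continuousAt.continuousWithinAt
  have hgrowth := (convex_Icc (t₀ - Δ) (t₀ + Δ)).mul_sub_le_image_sub_of_le_deriv hcont
    (fun t ht => (hg t (interior_subset ht)).differentiableAt.differentiableWithinAt)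
    (fun t ht => (hg t (interior_subset ht)).deriv ▸ hc t (interior_subset ht))
  have hleft := hgrowth _ ⟨le_rfl, by linarith⟩ _ hmem (by linarith)
  have hright := hgrowth _ hmem _ ⟨by linarith, le_rfl⟩ (by linarith)
  obtain ⟨hlo, hhi⟩ := abs_le.1 h₀
  exact intermediate_value_Icc (by linarith) hcont ⟨by linarith, by linarith⟩

namespace E2

theorem inner_eq (x y : E2) : ⟪x, y⟫ = x 0 * y 0 + x 1 * y 1 := by
  simp [PiLp.inner_apply, Fin.sum_univ_two, mul_comm]

theorem norm_sq_eq (x : E2) : ‖x‖ ^ 2 = x 0 ^ 2 + x 1 ^ 2 := by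
  rw [← real_inner_self_eq_norm_sq, inner_eq]; ring

end E2

theorem intVec_sub (k l : Fin 2 → ℤ) : intVec (k - l) = intVec k - intVec l := by
  ext i; simp [intVec]

theorem intVec_zero : intVec 0 = 0 := by
  ext i; simp [intVec]

theorem intVec_neg (k : Fin 2 → ℤ) : intVec (-k) = -intVec k := by
  ext i; simp [intVec]

theorem exists_norm_sub_intVec_le (x : E2) : ∃ k, ‖x - intVec k‖ ≤ 2 := by
  refine ⟨fun i => ⌊x i⌋, ?_⟩
  have hfract (i : Fin 2) : (x - intVec fun i => ⌊x i⌋) i = Int.fract (x i) := by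
    simp [intVec]
  have : ‖x - intVec fun i => ⌊x i⌋‖ ^ 2 ≤ 2 ^ 2 := by
    rw [E2.norm_sq_eq, hfract, hfract]
    nlinarith [Int.fract_nonneg (x 0), Int.fract_lt_one (x 0), Int.fract_nonneg (x 1),
      Int.fract_lt_one (x 1)]
  exact (pow_le_pow_iff_left₀ (norm_nonneg _) zero_le_two two_ne_zero).1 this

namespace ZPeriodic

theorem apply_sub {α : Type*} {f : E2 → α} (hf : ZPeriodic f) (x : E2) (k : Fin 2 → ℤ) :
    f (x - intVec k) = f x := by
  simpa using (hf (x - intVec k) k).symm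

theorem exists_norm_le {F : Type*} [SeminormedAddCommGroup F] {f : E2 → F} (hf : ZPeriodic f)
    (hc : Continuous f) : ∃ B, ∀ x, ‖f x‖ ≤ B := by
  obtain ⟨B, hB⟩ := (isCompact_closedBall (0 : E2) 2).exists_bound_of_continuousOn hc.continuousOn
  refine ⟨B, fun x => ?_⟩
  obtain ⟨k, hk⟩ := exists_norm_sub_intVec_le x
  rw [← hf.apply_sub x k]
  exact hB _ (mem_closedBall_zero_iff.2 hk)

theorem infDist_stag {V : E2 → E2} (hV : ZPeriodic V) (x : E2) (k : Fin 2 → ℤ) :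
    infDist (x - intVec k) (Stag V) = infDist x (Stag V) := by
  have himage : (fun y => y - intVec k) '' Stag V = Stag V := by
    ext y
    simp only [mem_image, Stag, mem_ofPred_eq]
    constructor
    · rintro ⟨z, hz, rfl⟩
      rwa [hV.apply_sub]
    · exact fun hy => ⟨y + intVec k, by rwa [hV], add_sub_cancel_right _ _⟩
  conv_lhs => rw [← himage]
  exact infDist_image (Isometry.of_dist_eq fun a b => dist_sub_right a b (intVec k))

end ZPeriodic

namespace IsStreamFunction

variable {V : E2 → E2} {H : E2 → ℝ}

theorem apply_eq (hH : IsStreamFunction V H) (x : E2) :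
    V x 0 = -gradient H x 1 ∧ V x 1 = gradient H x 0 := by
  have hpartial (j : Fin 2) : fderiv ℝ H x (EuclideanSpace.single j 1) = gradient H x j := by
    rw [← inner_gradient_left, E2.inner_eq]
    fin_cases j <;> simp
  rw [← hpartial, ← hpartial]
  exact hH.2.2.2 x

theorem zPeriodic (hH : IsStreamFunction V H) : ZPeriodic V := by
  intro x k
  have hfderiv : fderiv ℝ H (x + intVec k) = fderiv ℝ H x := by
    rw [← fderiv_comp_add_right]
    exact congrArg (fderiv ℝ · x) (funext fun y => hH.1 y k)
  ext i
  fin_cases i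
  · simp [(hH.2.2.2 _).1, hfderiv]
  · simp [(hH.2.2.2 _).2, hfderiv]

theorem inner_gradient_self_eq_zero (hH : IsStreamFunction V H) (x : E2) :
    ⟪gradient H x, V x⟫ = 0 := by
  obtain ⟨h0, h1⟩ := hH.apply_eq x
  rw [E2.inner_eq, h0, h1]; ring

-- In the plane, `w ⊥ V x` means that `w` is parallel to `∇H x`, of which `V x` is a rotation.
theorem inner_gradient_sq_of_inner_eq_zero (hH : IsStreamFunction V H) {x w : E2}
    (hw : ⟪w, V x⟫ = 0) : ⟪gradient H x, w⟫ ^ 2 = ‖V x‖ ^ 2 * ‖w‖ ^ 2 := by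
  obtain ⟨h0, h1⟩ := hH.apply_eq x
  rw [E2.inner_eq, h0, h1] at hw
  rw [E2.inner_eq, E2.norm_sq_eq, E2.norm_sq_eq, h0, h1]
  linear_combination (-(gradient H x 0 * w 1) + gradient H x 1 * w 0) * hw

theorem norm_sub_eq (hH : IsStreamFunction V H) (x y : E2) :
    ‖V x - V y‖ = ‖gradient H x - gradient H y‖ := by
  obtain ⟨hx0, hx1⟩ := hH.apply_eq x
  obtain ⟨hy0, hy1⟩ := hH.apply_eq y
  rw [← sq_eq_sq₀ (norm_nonneg _) (norm_nonneg _), E2.norm_sq_eq, E2.norm_sq_eq]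
  simp only [PiLp.sub_apply, hx0, hx1, hy0, hy1]
  ring

theorem exists_lipschitzWith (hH : IsStreamFunction V H) :
    ∃ L, LipschitzWith L V ∧ LipschitzWith L (gradient H) := by
  obtain ⟨L, hL⟩ := hH.2.2.1
  refine ⟨L, LipschitzWith.of_dist_le_mul fun x y => ?_, hL⟩
  rw [dist_eq_norm, hH.norm_sub_eq, ← dist_eq_norm]
  exact hL.dist_le_mul x y

theorem apply_orbit (hH : IsStreamFunction V H) {ζ : ℝ → E2} (hζ : IsOrbit V ζ) (t : ℝ) :
    H (ζ t) = H (ζ 0) := by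
  have hderiv (s : ℝ) : HasDerivAt (fun u => H (ζ u)) 0 s := by
    have := (hH.2.1 (ζ s)).hasFDerivAt.comp_hasDerivAt s (hζ s)
    rwa [← inner_gradient_left, hH.inner_gradient_self_eq_zero] at this
  exact is_const_of_deriv_eq_zero (fun s => (hderiv s).differentiableAt)
    (fun s => (hderiv s).deriv) t 0

end IsStreamFunction

def transversalSegment (V : E2 → E2) (x₀ : E2) (r : ℝ) : Set E2 :=
  {y | y ∈ closedBall x₀ r ∧ ⟪y - x₀, V x₀⟫ = 0}

namespace IsOrbit

variable {V : E2 → E2} {ξ ζ : ℝ → E2}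

theorem sub_intVec (hξ : IsOrbit V ξ) (hV : ZPeriodic V) (k : Fin 2 → ℤ) :
    IsOrbit V (fun t => ξ t - intVec k) := fun t => by
  rw [hV.apply_sub]
  exact (hξ t).sub_const _

theorem comp_add_const (hξ : IsOrbit V ξ) (c : ℝ) : IsOrbit V (fun t => ξ (t + c)) := fun t =>
  (hξ (t + c)).comp_add_const t c

theorem eq_of_apply_eq {K : NNReal} (hV : LipschitzWith K V) (hξ : IsOrbit V ξ) {ζ : ℝ → E2}
    (hζ : IsOrbit V ζ) {a : ℝ} (h : ξ a = ζ a) : ξ = ζ :=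
  ODE_solution_unique_univ (v := fun _ => V) (s := fun _ => univ)
    (fun _ => hV.lipschitzOnWith) (fun t => ⟨hξ t, trivial⟩) (fun t => ⟨hζ t, trivial⟩) h

theorem norm_sub_le {B : ℝ} (hξ : IsOrbit V ξ) (hB : ∀ x, ‖V x‖ ≤ B) (s t : ℝ) :
    ‖ξ s - ξ t‖ ≤ B * |s - t| :=
  convex_univ.norm_image_sub_le_of_norm_hasDerivWithin_le (fun u _ => (hξ u).hasDerivWithinAt)
    (fun _ _ => hB _) trivial trivial

theorem isClosedOrbit_or_isNoncontractibleOrbit {K : NNReal} (hV : LipschitzWith K V)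
    (hper : ZPeriodic V) (hξ : IsOrbit V ξ) {s t : ℝ} (hst : s ≠ t) {k : Fin 2 → ℤ}
    (h : ξ t - ξ s = intVec k) : IsClosedOrbit V ξ ∨ IsNoncontractibleOrbit V ξ := by
  wlog hlt : s < t generalizing s t k
  · refine this hst.symm (k := -k) ?_ (hst.lt_or_gt.resolve_left hlt)
    rw [intVec_neg, ← h, neg_sub]
  have hshift : (fun u => ξ (u + (t - s)) - intVec k) = ξ := by
    refine ((hξ.comp_add_const _).sub_intVec hper k).eq_of_apply_eq hV hξ (a := s) ?_
    simp [← h]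
  have hperiod : ξ (t - s) - ξ 0 = intVec k := by
    rw [← congrFun hshift 0]; simp
  by_cases hk : k = 0
  · subst hk
    exact Or.inl ⟨hξ, t - s, sub_pos.2 hlt, sub_eq_zero.1 (hperiod.trans intVec_zero)⟩
  · exact Or.inr ⟨hξ, t - s, sub_pos.2 hlt, k, hk, hperiod⟩

theorem exists_mem_transversalSegment (hζ : IsOrbit V ζ) {K : NNReal} (hV : LipschitzWith K V)
    {B : ℝ} (hB : ∀ x, ‖V x‖ ≤ B) {x₀ : E2} {r δ Δ : ℝ} (hKr : K * r ≤ ‖V x₀‖ / 2)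
    (hΔ : 0 ≤ Δ) (hδΔ : 2 * δ ≤ ‖V x₀‖ * Δ) (hΔr : δ + B * Δ ≤ r) {t₀ : ℝ}
    (h₀ : ‖ζ t₀ - x₀‖ ≤ δ) : ∃ s ∈ Icc (t₀ - Δ) (t₀ + Δ), ζ s ∈ transversalSegment V x₀ r := by
  set m := ‖V x₀‖
  have hnear : ∀ t ∈ Icc (t₀ - Δ) (t₀ + Δ), ζ t ∈ closedBall x₀ r := by
    intro t ht
    have hB₀ : 0 ≤ B := (norm_nonneg _).trans (hB x₀)
    have htime : |t - t₀| ≤ Δ := abs_sub_le_iff.2 ⟨by linarith [ht.2], by linarith [ht.1]⟩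
    rw [mem_closedBall, dist_eq_norm]
    calc ‖ζ t - x₀‖ ≤ ‖ζ t - ζ t₀‖ + ‖ζ t₀ - x₀‖ := norm_sub_le_norm_sub_add_norm_sub _ _ _
      _ ≤ B * |t - t₀| + δ := add_le_add (hζ.norm_sub_le hB t t₀) h₀
      _ ≤ r := by nlinarith
  have hspeed : ∀ t ∈ Icc (t₀ - Δ) (t₀ + Δ), m ^ 2 / 2 ≤ ⟪V (ζ t), V x₀⟫ := by
    intro t ht
    have hdiff : ‖V (ζ t) - V x₀‖ ≤ m / 2 := by
      rw [← dist_eq_norm]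
      exact (hV.dist_le_mul _ _).trans (le_trans (by gcongr; exact hnear t ht) hKr)
    have := abs_real_inner_le_norm (V (ζ t) - V x₀) (V x₀)
    rw [inner_sub_left, real_inner_self_eq_norm_sq] at this
    nlinarith [abs_le.1 this, norm_nonneg (V x₀)]
  obtain ⟨s, hs, hzero⟩ :=
    exists_mem_Icc_eq_zero_of_le_deriv (g := fun t => ⟪ζ t - x₀, V x₀⟫) hΔ
    (fun t _ => (((hζ t).sub_const x₀).inner ℝ (hasDerivAt_const t (V x₀))).congr_deriv (by simp))
    hspeed (by
      refine (abs_real_inner_le_norm _ _).trans ?_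
      nlinarith [norm_nonneg (V x₀)])
  exact ⟨s, hs, hnear s hs, hzero⟩

end IsOrbit

theorem exists_far_of_not_asympToStag {V : E2 → E2} {ξ : ℝ → E2} (h : ¬AsympToStag V ξ) :
    ∃ ε > 0, ∀ R, ∃ t, R ≤ |t| ∧ ε ≤ infDist (ξ t) (Stag V) := by
  by_contra! hnear
  have htendsto (l : Filter ℝ) (hl : ∀ R, ∀ᶠ t in l, R ≤ |t|) :
      Tendsto (fun t => infDist (ξ t) (Stag V)) l (𝓝 0) := by
    refine tendsto_order.2 ⟨fun a ha => .of_forall fun t => ha.trans_le infDist_nonneg,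
      fun ε hε => ?_⟩
    obtain ⟨R, hR⟩ := hnear ε hε
    exact (hl R).mono hR
  exact h ⟨htendsto atTop fun R => (eventually_ge_atTop R).mono fun t ht => by
      linarith [le_abs_self t],
    htendsto atBot fun R => (eventually_le_atBot (-R)).mono fun t ht => by
      linarith [neg_le_abs t]⟩

namespace IsStreamFunction

variable {V : E2 → E2} {H : E2 → ℝ}

theorem injOn_transversalSegment (hH : IsStreamFunction V H) {L : NNReal}
    (hL : LipschitzWith L (gradient H)) {x₀ : E2} {r : ℝ} (hr : L * r < ‖V x₀‖) :
    InjOn H (transversalSegment V x₀ r) := by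
  intro y₁ ⟨h₁, p₁⟩ y₂ ⟨h₂, p₂⟩ hHeq
  by_contra hne
  have hw : 0 < ‖y₂ - y₁‖ := norm_pos_iff.2 (sub_ne_zero.2 (Ne.symm hne))
  have horth : ⟪y₂ - y₁, V x₀⟫ = 0 := by
    rw [← sub_sub_sub_cancel_right y₂ y₁ x₀, inner_sub_left, p₁, p₂, sub_zero]
  have hexact : |⟪gradient H x₀, y₂ - y₁⟫| = ‖V x₀‖ * ‖y₂ - y₁‖ := by
    rw [← sq_eq_sq₀ (abs_nonneg _) (by positivity), sq_abs, mul_pow]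
    exact hH.inner_gradient_sq_of_inner_eq_zero horth
  have hbound := abs_inner_gradient_sub_le_of_eq hH.2.1 hL h₁ h₂ hHeq
  nlinarith

theorem exists_transversal_section (hH : IsStreamFunction V H) {x₀ : E2} (hx₀ : V x₀ ≠ 0) :
    ∃ δ > 0, ∃ Δ : ℝ, ∃ S : Set E2, InjOn H S ∧ ∀ ζ, IsOrbit V ζ → ∀ t₀,
      ‖ζ t₀ - x₀‖ ≤ δ → ∃ s ∈ Icc (t₀ - Δ) (t₀ + Δ), ζ s ∈ S := by
  obtain ⟨L, hLV, hLH⟩ := hH.exists_lipschitzWith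
  obtain ⟨B, hB⟩ := hH.zPeriodic.exists_norm_le hLV.continuous
  set m := ‖V x₀‖
  have hm : 0 < m := norm_pos_iff.2 hx₀
  have hB₀ : 0 < B := hm.trans_le (hB x₀)
  obtain ⟨r, hr, hLr⟩ : ∃ r > 0, L * r ≤ m / 2 := by
    refine ⟨m / (2 * (L + 1)), by positivity, ?_⟩
    rw [mul_div_assoc', div_le_div_iff₀ (by positivity) two_pos]
    nlinarith
  -- With `Δ = r / (2B)` and `δ = mΔ / 2`, an orbit starting within `δ` of `x₀` stays in the ball
  -- of radius `r` for a time `Δ`, long enough to cross the segment.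
  refine ⟨m * r / (4 * B), by positivity, r / (2 * B), _,
    hH.injOn_transversalSegment hLH (by linarith),
    fun ζ hζ t₀ h₀ => hζ.exists_mem_transversalSegment hLV hB hLr (by positivity) ?_ ?_ h₀⟩
  · apply le_of_eq; field_simp; ring
  · have hδ : m * r / (4 * B) ≤ r / 4 := by
      rw [div_le_div_iff₀ (by positivity) four_pos]
      nlinarith [hB x₀]
    have hΔ : B * (r / (2 * B)) = r / 2 := by field_simp
    linarith

theorem isClosedOrbit_or_isNoncontractibleOrbit_of_far (hH : IsStreamFunction V H)
    {ξ : ℝ → E2} (hξ : IsOrbit V ξ) {ε : ℝ} (hε : 0 < ε)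
    (hfar : ∀ R, ∃ t, R ≤ |t| ∧ ε ≤ infDist (ξ t) (Stag V)) :
    IsClosedOrbit V ξ ∨ IsNoncontractibleOrbit V ξ := by
  obtain ⟨L, hLV, -⟩ := hH.exists_lipschitzWith
  have hper := hH.zPeriodic
  choose t ht hεt using fun n : ℕ => hfar n
  choose k hk using fun n => exists_norm_sub_intVec_le (ξ (t n))
  obtain ⟨x₀, -, φ, hφ, hlim⟩ := (isCompact_closedBall (0 : E2) 2).tendsto_subseq
    (x := fun n => ξ (t n) - intVec (k n)) fun n => mem_closedBall_zero_iff.2 (hk n)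
  have hx₀ : V x₀ ≠ 0 := by
    have : ε ≤ infDist x₀ (Stag V) :=
      ge_of_tendsto (((continuous_infDist_pt _).tendsto x₀).comp hlim)
        (.of_forall fun n => by simpa [hper.infDist_stag] using hεt (φ n))
    intro h
    rw [infDist_zero_of_mem (s := Stag V) h] at this
    linarith
  obtain ⟨δ, hδ, Δ, S, hinj, hcross⟩ := hH.exists_transversal_section hx₀
  obtain ⟨N, hN⟩ := Metric.tendsto_atTop.1 hlim δ hδ
  obtain ⟨N', hN'⟩ := exists_nat_ge (|t (φ N)| + 2 * Δ + 1)
  set a := φ N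
  set b := φ (max N N')
  have hlate : |t a| + 2 * Δ + 1 ≤ |t b| :=
    hN'.trans <| (Nat.cast_le.2 ((le_max_right N N').trans hφ.le_apply)).trans (ht b)
  obtain ⟨s₁, ⟨hs₁, hs₁'⟩, hS₁⟩ := hcross _ (hξ.sub_intVec hper (k a)) (t a)
    (by simpa [dist_eq_norm] using (hN N le_rfl).le)
  obtain ⟨s₂, ⟨hs₂, hs₂'⟩, hS₂⟩ := hcross _ (hξ.sub_intVec hper (k b)) (t b)
    (by simpa [dist_eq_norm] using (hN _ (le_max_left N N')).le)
  have hsame := hinj hS₁ hS₂ (by simp only [hH.1.apply_sub, hH.apply_orbit hξ])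
  refine hξ.isClosedOrbit_or_isNoncontractibleOrbit hLV hper (s := s₁) (t := s₂) ?_
    (k := k b - k a) ?_
  · rintro rfl
    have hclose : |t b - t a| ≤ 2 * Δ := abs_sub_le_iff.2 ⟨by linarith, by linarith⟩
    linarith [abs_sub_abs_le_abs_sub (t b) (t a)]
  · rw [intVec_sub]
    exact sub_eq_sub_iff_sub_eq_sub.1 hsame.symm

end IsStreamFunction

theorem statement2_general
    (V : E2 → E2)
    (H : E2 → ℝ) (hH : IsStreamFunction V H)
    (ξ : ℝ → E2) (hξ : IsOrbit V ξ) :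
    IsClosedOrbit V ξ ∨ IsNoncontractibleOrbit V ξ ∨ AsympToStag V ξ := by
  by_cases hasymp : AsympToStag V ξ
  · exact Or.inr (Or.inr hasymp)
  obtain ⟨ε, hε, hfar⟩ := exists_far_of_not_asympToStag hasymp
  exact (hH.isClosedOrbit_or_isNoncontractibleOrbit_of_far hξ hε hfar).imp_right Or.inl

/-- Lemma 2.1. Every orbit of a flow with a stream function is a closed
orbit, a non-contractible periodic orbit, or is asymptotic to the stagnation set. -/
theorem statement2
    (V : E2 → E2) (K : NNReal) (hLip : LipschitzWith K V) (hper : ZPeriodic V)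
    (H : E2 → ℝ) (hH : IsStreamFunction V H)
    (ξ : ℝ → E2) (hξ : IsOrbit V ξ) :
    IsClosedOrbit V ξ ∨ IsNoncontractibleOrbit V ξ ∨ AsympToStag V ξ :=
  statement2_general V H hH ξ hξ
end
end

section
/- Suppose V admits a stream function H and the swirls of V have uniformly bounded size M for some M > 0. Then every cell S is bounded, closed and connected, satisfies S = closure(S°) where S° is the interior of S, and moreover S, S° and ∂S are all flow invariant. -/
/-!
A Lipschitz, `ℤ²`-periodic field is bounded, so its orbits exist globally, are unique, and depend
continuously on their initial point (Grönwall). Hence flow invariance passes to complements,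
intersections, unions and closures, and therefore to interiors and frontiers. The region enclosed
by a closed orbit is invariant: an orbit starting off the curve never meets it (uniqueness), so it
stays in one bounded component of the complement.

For a cell `S = closure (⋃ m, encl (range (ζ m)))`, consecutive orbits of the chain are disjoint,
so each orbit lies in a bounded component of the complement of the next one; the union is
therefore open, which makes `S` the closure of its interior. The union is bounded because each
enclosed region lies in the ball of radius `M` around a point of its orbit and all of them contain
`ζ 0 0`, and it is connected as a union of connected regions sharing that point.
-/

open MeasureTheory Filter Topology Set Metric Bornology

noncomputable section

section Orbit

variable {V : E2 → E2} {K : NNReal} {ξ η : ℝ → E2}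

theorem IsOrbit.continuous (hξ : IsOrbit V ξ) : Continuous ξ :=
  IsIntegralCurve.continuous hξ

theorem IsOrbit.comp_add (hξ : IsOrbit V ξ) (a : ℝ) : IsOrbit V (ξ ∘ (· + a)) :=
  IsIntegralCurve.comp_add hξ a

theorem IsOrbit.comp_neg (hξ : IsOrbit V ξ) : IsOrbit (-V) (ξ ∘ Neg.neg) := fun s => by
  simpa using (hξ (-s)).scomp s (hasDerivAt_neg' s)

theorem IsOrbit.eq_of_apply_eq_s5 (hLip : LipschitzWith K V) (hξ : IsOrbit V ξ) (hη : IsOrbit V η)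
    {a : ℝ} (h : ξ a = η a) : ξ = η :=
  ODE_solution_unique_univ (v := fun _ => V) (s := fun _ => univ)
    (fun _ => hLip.lipschitzOnWith) (fun t => ⟨hξ t, trivial⟩) (fun t => ⟨hη t, trivial⟩) h

theorem IsOrbit.range_eq_of_apply_eq (hLip : LipschitzWith K V) (hξ : IsOrbit V ξ)
    (hη : IsOrbit V η) {a b : ℝ} (h : ξ a = η b) : range ξ = range η := by
  have hshift : ξ ∘ (· + a) = η ∘ (· + b) :=
    (hξ.comp_add a).eq_of_apply_eq_s5 hLip (hη.comp_add b) (a := 0) (by simpa using h)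
  calc range ξ = range (ξ ∘ (· + a)) := ((Equiv.addRight a).surjective.range_comp ξ).symm
    _ = range (η ∘ (· + b)) := by rw [hshift]
    _ = range η := (Equiv.addRight b).surjective.range_comp η

theorem IsOrbit.dist_le_of_nonneg (hLip : LipschitzWith K V) (hξ : IsOrbit V ξ)
    (hη : IsOrbit V η) {t : ℝ} (ht : 0 ≤ t) :
    dist (ξ t) (η t) ≤ dist (ξ 0) (η 0) * Real.exp (K * t) := by
  simpa using dist_le_of_trajectories_ODE (v := fun _ => V) (fun _ => hLip)
    hξ.continuous.continuousOn (fun s _ => (hξ s).hasDerivWithinAt)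
    hη.continuous.continuousOn (fun s _ => (hη s).hasDerivWithinAt) le_rfl t ⟨ht, le_rfl⟩

theorem IsOrbit.dist_le (hLip : LipschitzWith K V) (hξ : IsOrbit V ξ) (hη : IsOrbit V η)
    (t : ℝ) : dist (ξ t) (η t) ≤ dist (ξ 0) (η 0) * Real.exp (K * |t|) := by
  rcases le_total 0 t with ht | ht
  · simpa [abs_of_nonneg ht] using hξ.dist_le_of_nonneg hLip hη ht
  · simpa [abs_of_nonpos ht] using
      hξ.comp_neg.dist_le_of_nonneg hLip.neg hη.comp_neg (neg_nonneg.2 ht)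

theorem exists_isOrbit_Ioo (hLip : LipschitzWith K V) {C : NNReal} (hC : ∀ y, ‖V y‖ ≤ C)
    (x : E2) (a : NNReal) :
    ∃ f : ℝ → E2, f 0 = x ∧ ∀ t ∈ Ioo (-a : ℝ) a, HasDerivAt f (V (f t)) t := by
  have h0 : (0 : ℝ) ∈ Icc (-a : ℝ) a := ⟨by simp, a.2⟩
  have hPL : IsPicardLindelof (fun _ => V) (⟨0, h0⟩ : Icc (-a : ℝ) a) x (C * a) 0 C K :=
    .of_time_independent (fun y _ => hC y) hLip.lipschitzOnWith (by simp)
  obtain ⟨f, hf0, hf⟩ := hPL.exists_eq_forall_mem_Icc_hasDerivWithinAt₀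
  exact ⟨f, hf0, fun t ht =>
    (hf t (Ioo_subset_Icc_self ht)).hasDerivAt (Icc_mem_nhds ht.1 ht.2)⟩

/-- Local solutions `γ a` on `(-a, a)` agree where they overlap, so `t ↦ γ (|t| + 1) t` is a
global orbit. -/
theorem exists_isOrbitThrough (hLip : LipschitzWith K V) {C : NNReal} (hC : ∀ y, ‖V y‖ ≤ C)
    (x : E2) : ∃ ξ : ℝ → E2, IsOrbitThrough V ξ x := by
  choose γ hγ0 hγ using fun a : ℝ => exists_isOrbit_Ioo hLip hC x a.toNNReal
  have hagree : ∀ {a b t : ℝ}, 0 < a → a ≤ b → t ∈ Ioo (-a) a → γ a t = γ b t := by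
    intro a b t ha hab ht
    have hsub : Ioo (-a) a ⊆ Ioo (-b.toNNReal : ℝ) b.toNNReal := by
      rw [Real.coe_toNNReal _ (ha.le.trans hab)]
      exact Ioo_subset_Ioo (neg_le_neg hab) hab
    refine ODE_solution_unique_of_mem_Ioo (v := fun _ => V) (s := fun _ => univ)
      (fun _ _ => hLip.lipschitzOnWith) (t₀ := 0) ⟨neg_neg_of_pos ha, ha⟩ (fun s hs => ?_)
      (fun s hs => ⟨hγ b s (hsub hs), trivial⟩) (by rw [hγ0, hγ0]) ht
    refine ⟨hγ a s ?_, trivial⟩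
    rwa [Real.coe_toNNReal _ ha.le]
  refine ⟨fun t => γ (|t| + 1) t, fun t => ?_, hγ0 _⟩
  have hpos : 0 < |t| + 1 := by positivity
  have ht : t ∈ Ioo (-(|t| + 1)) (|t| + 1) := abs_lt.1 (lt_add_one _)
  have heq : (fun s => γ (|s| + 1) s) =ᶠ[𝓝 t] γ (|t| + 1) := by
    filter_upwards [Ioo_mem_nhds ht.1 ht.2] with s hs
    rcases le_total (|s| + 1) (|t| + 1) with h | h
    · exact hagree (by positivity) h (abs_lt.1 (lt_add_one _))
    · exact (hagree hpos h hs).symm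
  show HasDerivAt _ (V (γ (|t| + 1) t)) t
  refine (hγ _ t ?_).congr_of_eventuallyEq heq
  rwa [Real.coe_toNNReal _ hpos.le]

end Orbit

theorem ZPeriodic.exists_norm_le_s5 {F : Type*} [NormedAddCommGroup F] {f : E2 → F}
    (hf : Continuous f) (hper : ZPeriodic f) : ∃ C : NNReal, ∀ x, ‖f x‖ ≤ C := by
  have hcube : IsCompact (f '' (WithLp.toLp 2 '' Icc (0 : Fin 2 → ℝ) 1)) :=
    (isCompact_Icc.image (PiLp.continuous_toLp 2 _)).image hf
  obtain ⟨R, hR, hbound⟩ := hcube.isBounded.exists_pos_norm_le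
  refine ⟨⟨R, hR.le⟩, fun x => hbound _ ⟨_, ⟨fun i => Int.fract (x i), ?_, rfl⟩, ?_⟩⟩
  · exact ⟨fun i => Int.fract_nonneg _, fun i => (Int.fract_lt_one _).le⟩
  · have hx : x = WithLp.toLp 2 (fun i => Int.fract (x i)) + intVec (fun i => ⌊x i⌋) := by
      ext i; simp [intVec]
    conv_rhs => rw [hx]
    exact (hper _ _).symm

theorem isOpen_setOf_connectedComponentIn {X : Type*} [TopologicalSpace X]
    [LocallyConnectedSpace X] {J : Set X} (hJ : IsClosed J) (P : Set X → Prop) :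
    IsOpen {x | x ∉ J ∧ P (connectedComponentIn Jᶜ x)} := by
  refine isOpen_iff_mem_nhds.2 fun x ⟨hxJ, hP⟩ => ?_
  filter_upwards [hJ.isOpen_compl.connectedComponentIn.mem_nhds (mem_connectedComponentIn hxJ)]
    with y hy
  exact ⟨connectedComponentIn_subset _ _ hy, connectedComponentIn_eq hy ▸ hP⟩

def inside (J : Set E2) : Set E2 := {x | x ∉ J ∧ IsBounded (connectedComponentIn Jᶜ x)}

section Inside

variable {J : Set E2}

theorem isOpen_inside (hJ : IsClosed J) : IsOpen (inside J) :=
  isOpen_setOf_connectedComponentIn hJ _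

theorem isClosed_encl (hJ : IsClosed J) : IsClosed (encl J) := by
  have hcompl : (encl J)ᶜ = {x | x ∉ J ∧ ¬ IsBounded (connectedComponentIn Jᶜ x)} := by
    ext x; simp only [encl, mem_compl_iff, mem_union, mem_ofPred_eq]; tauto
  exact isOpen_compl_iff.1 (hcompl ▸ isOpen_setOf_connectedComponentIn hJ (¬ IsBounded ·))

theorem connectedComponentIn_subset_inside {x : E2} (hx : x ∈ inside J) :
    connectedComponentIn Jᶜ x ⊆ inside J :=
  fun _ hy => ⟨connectedComponentIn_subset _ _ hy, connectedComponentIn_eq hy ▸ hx.2⟩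

/-- A point outside the ball lies in the unbounded component of `Jᶜ`: the ray from `c` through
it stays outside the ball. -/
theorem encl_subset_closedBall {c : E2} {r : ℝ} (hJ : J ⊆ closedBall c r) :
    encl J ⊆ closedBall c r := by
  rintro x (hx | ⟨hxJ, hbdd⟩)
  · exact hJ hx
  by_contra hxc
  have hr : r < dist x c := not_le.1 hxc
  rcases eq_or_ne x c with rfl | hne
  · have hJe : J = ∅ :=
      subset_empty_iff.1 ((closedBall_eq_empty (x := x)).2 (by simpa using hr) ▸ hJ)
    rw [hJe, compl_empty, connectedComponentIn_univ,
      PreconnectedSpace.connectedComponent_eq_univ] at hbdd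
    exact NormedSpace.unbounded_univ ℝ E2 hbdd
  set ray : ℝ → E2 := fun s => c + s • (x - c)
  have hdist : ∀ s, dist (ray s) c = |s| * dist x c := fun s => by
    simp [ray, dist_eq_norm, norm_smul]
  have hray : ray '' Ici 1 ⊆ connectedComponentIn Jᶜ x := by
    refine (isPreconnected_Ici.image _ (by fun_prop : Continuous ray).continuousOn)
      |>.subset_connectedComponentIn ⟨1, mem_Ici.2 le_rfl, by simp [ray]⟩ ?_
    rintro _ ⟨s, hs, rfl⟩ hJs
    have hs1 : (1 : ℝ) ≤ s := hs
    have := hJ hJs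
    rw [mem_closedBall, hdist, abs_of_nonneg (by linarith)] at this
    nlinarith [dist_nonneg (x := x) (y := c)]
  obtain ⟨R, hR⟩ := (hbdd.subset hray).subset_closedBall c
  have hd : 0 < dist x c := dist_pos.2 hne
  set s := max 1 ((R + 1) / dist x c)
  have hs := hR ⟨s, mem_Ici.2 (le_max_left _ _), rfl⟩
  rw [mem_closedBall, hdist, abs_of_nonneg (by positivity)] at hs
  have : R + 1 ≤ s * dist x c := (div_le_iff₀ hd).1 (le_max_right _ _)
  linarith

/-- Each bounded component of `Jᶜ` has a frontier point, which lies on `J`; so `encl J` is a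
union of connected sets through a common point of `J`. -/
theorem isPreconnected_encl (hJ : IsClosed J) (hJconn : IsPreconnected J) {p : E2}
    (hp : p ∈ J) : IsPreconnected (encl J) := by
  refine isPreconnected_of_forall p fun y hy => ?_
  rcases hy with hyJ | hy
  · exact ⟨J, subset_union_left, hp, hyJ, hJconn⟩
  set C := connectedComponentIn Jᶜ y
  have hCconn : IsPreconnected (closure C) := isPreconnected_connectedComponentIn.closure
  have hCJ : (closure C ∩ J).Nonempty := by
    by_contra! hdisj
    have hclosed : closure C ⊆ C := hCconn.subset_connectedComponentIn
      (subset_closure (mem_connectedComponentIn hy.1))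
      fun z hz hzJ => hdisj.subset ⟨hz, hzJ⟩
    have hclopen : IsClopen C :=
      ⟨closure_subset_iff_isClosed.1 hclosed, hJ.isOpen_compl.connectedComponentIn⟩
    rcases isClopen_iff.1 hclopen with hempty | huniv
    · exact (hempty ▸ mem_connectedComponentIn hy.1 : y ∈ (∅ : Set E2))
    · exact NormedSpace.unbounded_univ ℝ E2 (huniv ▸ hy.2)
  obtain ⟨z, hzC, hzJ⟩ := hCJ
  refine ⟨J ∪ closure C, union_subset subset_union_left ?_, Or.inl hp,
    Or.inr (subset_closure (mem_connectedComponentIn hy.1)), hJconn.union z hzJ hzC hCconn⟩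
  exact closure_minimal ((connectedComponentIn_subset_inside hy).trans subset_union_right)
    (isClosed_encl hJ)

end Inside

section FlowInvariant

variable {V : E2 → E2} {K : NNReal} {E F : Set E2}

theorem IsClosedOrbit.isCompact_range (hLip : LipschitzWith K V) {ζ : ℝ → E2}
    (hζ : IsClosedOrbit V ζ) : IsCompact (range ζ) := by
  obtain ⟨hζ, T, hT, hTeq⟩ := hζ
  have hper : Function.Periodic ζ T := fun t => by
    simpa [add_comm] using
      congrFun ((hζ.comp_add T).eq_of_apply_eq_s5 hLip hζ (a := 0) (by simpa using hTeq)) t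
  exact hper.compact_of_continuous hT.ne' hζ.continuous

theorem flowInvariant_range (hLip : LipschitzWith K V) {ζ : ℝ → E2} (hζ : IsOrbit V ζ) :
    FlowInvariant V (range ζ) := by
  rintro _ ⟨s, rfl⟩ ξ ⟨hξ, hξ0⟩
  exact (hξ.range_eq_of_apply_eq hLip hζ hξ0).le

theorem FlowInvariant.compl (hE : FlowInvariant V E) : FlowInvariant V Eᶜ := by
  rintro x hx ξ ⟨hξ, rfl⟩ _ ⟨t, rfl⟩ hξt
  exact hx (hE _ hξt _ ⟨hξ.comp_add t, by simp⟩ ⟨-t, by simp⟩)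

theorem FlowInvariant.inter (hE : FlowInvariant V E) (hF : FlowInvariant V F) :
    FlowInvariant V (E ∩ F) :=
  fun x hx ξ hξ => subset_inter (hE x hx.1 ξ hξ) (hF x hx.2 ξ hξ)

theorem FlowInvariant.iUnion {ι : Sort*} {E : ι → Set E2} (hE : ∀ i, FlowInvariant V (E i)) :
    FlowInvariant V (⋃ i, E i) := by
  intro x hx ξ hξ
  obtain ⟨i, hi⟩ := mem_iUnion.1 hx
  exact (hE i x hi ξ hξ).trans (subset_iUnion E i)

theorem FlowInvariant.encl {J : Set E2} (hJ : FlowInvariant V J) :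
    FlowInvariant V (encl J) := by
  rintro x (hxJ | hx) ξ hξ
  · exact (hJ x hxJ ξ hξ).trans subset_union_left
  have hξJ : range ξ ⊆ Jᶜ := hJ.compl x hx.1 ξ hξ
  exact ((isPreconnected_range hξ.1.continuous).subset_connectedComponentIn ⟨0, hξ.2⟩ hξJ).trans
    ((connectedComponentIn_subset_inside hx).trans subset_union_right)

theorem FlowInvariant.closure (hLip : LipschitzWith K V) {C : NNReal}
    (hC : ∀ y, ‖V y‖ ≤ C) (hE : FlowInvariant V E) : FlowInvariant V (closure E) := by
  rintro x hx ξ ⟨hξ, rfl⟩ _ ⟨t, rfl⟩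
  refine Metric.mem_closure_iff.2 fun ε hε => ?_
  have hc : 0 < Real.exp (K * |t|) := Real.exp_pos _
  obtain ⟨y, hyE, hxy⟩ := Metric.mem_closure_iff.1 hx (ε / Real.exp (K * |t|)) (by positivity)
  obtain ⟨η, hη, rfl⟩ := exists_isOrbitThrough hLip hC y
  refine ⟨η t, hE _ hyE η ⟨hη, rfl⟩ (mem_range_self t), ?_⟩
  calc dist (ξ t) (η t) ≤ dist (ξ 0) (η 0) * Real.exp (K * |t|) := hξ.dist_le hLip hη t
    _ < ε := (lt_div_iff₀ hc).1 hxy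

theorem FlowInvariant.interior (hLip : LipschitzWith K V) {C : NNReal}
    (hC : ∀ y, ‖V y‖ ≤ C) (hE : FlowInvariant V E) : FlowInvariant V (interior E) :=
  interior_eq_compl_closure_compl (s := E) ▸ (hE.compl.closure hLip hC).compl

theorem FlowInvariant.frontier (hLip : LipschitzWith K V) {C : NNReal}
    (hC : ∀ y, ‖V y‖ ≤ C) (hE : FlowInvariant V E) : FlowInvariant V (frontier E) :=
  (hE.closure hLip hC).inter (hE.interior hLip hC).compl

end FlowInvariant

section Chain

variable {V : E2 → E2} {K : NNReal} {ζ : ℕ → ℝ → E2}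

theorem range_subset_inside_succ (hLip : LipschitzWith K V) (hζ : ∀ m, IsClosedOrbit V (ζ m))
    (hmono : ∀ m, encl (range (ζ m)) ⊂ encl (range (ζ (m + 1)))) (m : ℕ) :
    range (ζ m) ⊆ inside (range (ζ (m + 1))) := by
  intro x hx
  rcases (hmono m).subset (Or.inl hx) with ⟨b, hb⟩ | hx'
  · obtain ⟨a, rfl⟩ := hx
    exact absurd (congrArg encl ((hζ m).1.range_eq_of_apply_eq hLip (hζ (m + 1)).1 hb.symm))
      (hmono m).ne
  · exact hx'

theorem isOpen_iUnion_encl (hLip : LipschitzWith K V) (hζ : ∀ m, IsClosedOrbit V (ζ m))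
    (hmono : ∀ m, encl (range (ζ m)) ⊂ encl (range (ζ (m + 1)))) :
    IsOpen (⋃ m, encl (range (ζ m))) := by
  have hunion : ⋃ m, encl (range (ζ m)) = ⋃ m, inside (range (ζ m)) := by
    refine (iUnion_subset fun m => union_subset ?_ (subset_iUnion _ m)).antisymm
      (iUnion_mono fun m => subset_union_right)
    exact (range_subset_inside_succ hLip hζ hmono m).trans
      (subset_iUnion (fun n => inside (range (ζ n))) (m + 1))
  rw [hunion]
  exact isOpen_iUnion fun m => isOpen_inside ((hζ m).isCompact_range hLip).isClosed

theorem apply_zero_zero_mem_encl_range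
    (hmono : ∀ m, encl (range (ζ m)) ⊂ encl (range (ζ (m + 1)))) (m : ℕ) :
    ζ 0 0 ∈ encl (range (ζ m)) :=
  monotone_nat_of_le_succ (fun n => (hmono n).subset) (Nat.zero_le m) (Or.inl (mem_range_self 0))

theorem encl_range_subset_closedBall (hLip : LipschitzWith K V) {M : ℝ}
    (hswirl : SwirlBound V M) {ξ : ℝ → E2} (hξ : IsClosedOrbit V ξ) :
    encl (range ξ) ⊆ closedBall (ξ 0) M :=
  encl_subset_closedBall fun _ hy => (dist_le_diam_of_mem
    (hξ.isCompact_range hLip).isBounded hy (mem_range_self 0)).trans (hswirl ξ hξ)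

theorem isBounded_iUnion_encl (hLip : LipschitzWith K V) {M : ℝ} (hswirl : SwirlBound V M)
    (hζ : ∀ m, IsClosedOrbit V (ζ m))
    (hmono : ∀ m, encl (range (ζ m)) ⊂ encl (range (ζ (m + 1)))) :
    IsBounded (⋃ m, encl (range (ζ m))) := by
  refine (isBounded_closedBall (x := ζ 0 0) (r := 2 * M)).subset (iUnion_subset fun m x hx => ?_)
  have hball := encl_range_subset_closedBall hLip hswirl (hζ m)
  have hx' : dist x (ζ m 0) ≤ M := hball hx
  have h0 : dist (ζ 0 0) (ζ m 0) ≤ M := hball (apply_zero_zero_mem_encl_range hmono m)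
  rw [mem_closedBall]
  linarith [dist_triangle_right x (ζ 0 0) (ζ m 0)]

theorem isPreconnected_iUnion_encl (hLip : LipschitzWith K V) (hζ : ∀ m, IsClosedOrbit V (ζ m))
    (hmono : ∀ m, encl (range (ζ m)) ⊂ encl (range (ζ (m + 1)))) :
    IsPreconnected (⋃ m, encl (range (ζ m))) :=
  isPreconnected_iUnion ⟨ζ 0 0, mem_iInter.2 (apply_zero_zero_mem_encl_range hmono)⟩ fun m =>
    isPreconnected_encl ((hζ m).isCompact_range hLip).isClosed
      (isPreconnected_range (hζ m).1.continuous) (mem_range_self 0)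

end Chain

theorem statement5_general
    (V : E2 → E2) (K : NNReal) (hLip : LipschitzWith K V) (hper : ZPeriodic V)
    (M : ℝ) (hswirl : SwirlBound V M)
    (S : Set E2) (hS : IsCell V S) :
    IsBounded S ∧ IsClosed S ∧ IsConnected S ∧ S = closure (interior S) ∧
    FlowInvariant V S ∧ FlowInvariant V (interior S) ∧ FlowInvariant V (frontier S) := by
  obtain ⟨hclosed, ζ, hζ, hmono, rfl, -⟩ := hS
  obtain ⟨C, hC⟩ := hper.exists_norm_le_s5 hLip.continuous
  have hopen := isOpen_iUnion_encl hLip hζ hmono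
  have hinv : FlowInvariant V (closure (⋃ m, encl (range (ζ m)))) :=
    (FlowInvariant.iUnion fun m => (flowInvariant_range hLip (hζ m).1).encl).closure hLip hC
  refine ⟨(isBounded_iUnion_encl hLip hswirl hζ hmono).closure, hclosed,
    ⟨?_, (isPreconnected_iUnion_encl hLip hζ hmono).closure⟩,
    (isClosed_closure.closure_interior_subset.antisymm
      (closure_mono hopen.subset_interior_closure)).symm,
    hinv, hinv.interior hLip hC, hinv.frontier hLip hC⟩
  exact ⟨ζ 0 0, subset_closure (mem_iUnion_of_mem 0 (apply_zero_zero_mem_encl_range hmono 0))⟩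

/-- Lemma 2.4 (1). Every cell is bounded, closed, connected, equals the
closure of its interior, and the cell, its interior and its boundary are flow invariant. -/
theorem statement5
    (V : E2 → E2) (K : NNReal) (hLip : LipschitzWith K V) (hper : ZPeriodic V)
    (H : E2 → ℝ) (hH : IsStreamFunction V H)
    (M : ℝ) (hM : 0 < M) (hswirl : SwirlBound V M)
    (S : Set E2) (hS : IsCell V S) :
    IsBounded S ∧ IsClosed S ∧ IsConnected S ∧ S = closure (interior S) ∧
    FlowInvariant V S ∧ FlowInvariant V (interior S) ∧ FlowInvariant V (frontier S) :=
  statement5_general V K hLip hper M hswirl S hS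

end
end

section
/- Suppose V admits a stream function H. Let θ > 0, and let x, y ∈ ℝ² satisfy H(x) = H(y) and y ∉ ξ(ℝ;x), where ξ(·;x) is the orbit of V with ξ(0;x) = x. Suppose γ : [0,T] → ℝ² is a continuous curve with γ(0) = x, γ(T) = y, and max_{t∈[0,T]} |H(γ(t)) − H(x)| ≤ θ. Then there exists t₀ ∈ [0,T] such that |V(γ(t₀))| ≤ 3(K₀ + 1)·θ^{1/3}. -/
open MeasureTheory Filter Topology Set Metric Bornology

noncomputable section

/-! Suppose `‖V‖ > c` all along `γ`. Near a point of the orbit `ξ`, `V` is comparable to its value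
there on a scale `ρ ≪ c²/K²`, so the normal line through a nearby point `z` crosses `ξ`, and along
that normal `H` changes at rate `≳ c`. Hence a point within `ρ` of `ξ` whose level is within `θ` of
`H(x)` lies within `4θ/c = ρ/3` of `ξ`; the choice `c = 3(K₀+1)θ^{1/3}` is what makes
`ρ = 12θ/c ≤ c²/(8K₀²)`. By continuity `γ` never leaves the `ρ/3`-neighbourhood of `ξ`, and at the
endpoint `H(y) = H(x)` exactly, so the same estimate puts `y` on `ξ`. -/

open scoped RealInnerProductSpace

theorem IsPreconnected.forall_le_of_forall_lt_imp_le {X α : Type*} [TopologicalSpace X]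
    [LinearOrder α] [TopologicalSpace α] [OrderClosedTopology α] [DenselyOrdered α] {s : Set X}
    (hs : IsPreconnected s) {f : X → α} (hf : ContinuousOn f s) {a : X} (ha : a ∈ s) {r R : α}
    (hrR : r < R) (har : f a ≤ r) (hgap : ∀ t ∈ s, f t < R → f t ≤ r) : ∀ t ∈ s, f t ≤ r := by
  intro t ht
  by_contra! hrt
  have hRt : R ≤ f t := not_lt.1 fun h => (hgap t ht h).not_gt hrt
  obtain ⟨b, hrb, hbR⟩ := exists_between hrR
  obtain ⟨t', ht', rfl⟩ := hs.intermediate_value ha ht hf ⟨har.trans hrb.le, hbR.le.trans hRt⟩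
  exact (hgap t' ht' hbR).not_gt hrb

section Flow

variable {F : Type*} [NormedAddCommGroup F] [InnerProductSpace ℝ F] {V : F → F} {ξ : ℝ → F}
  {K : NNReal}

theorem lipschitzWith_of_hasDerivAt_flow (hξ : ∀ t, HasDerivAt ξ (V (ξ t)) t)
    (hbound : ∀ z, ‖V z‖ ≤ K) : LipschitzWith K ξ :=
  lipschitzWith_of_nnnorm_deriv_le (fun t => (hξ t).differentiableAt) fun t => by
    rw [(hξ t).deriv, ← NNReal.coe_le_coe, coe_nnnorm]; exact hbound _

theorem exists_inner_flow_sub_eq_zero (hξ : ∀ t, HasDerivAt ξ (V (ξ t)) t)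
    (hV : LipschitzWith K V) (hξL : LipschitzWith K ξ) {z : F} {s₀ ρ m : ℝ} (hm : 0 < m)
    (hz : ‖z - ξ s₀‖ ≤ ρ) (hVm : m ≤ ‖V (ξ s₀)‖) (hρ : 4 * K ^ 2 * ρ ≤ m ^ 2) :
    ∃ s, |s - s₀| ≤ 2 * ρ / m ∧ ⟪V (ξ s₀), ξ s - z⟫ = 0 := by
  set n := V (ξ s₀)
  set a := 2 * ρ / m
  have hρ0 : 0 ≤ ρ := (norm_nonneg _).trans hz
  have ha0 : 0 ≤ a := by positivity
  set f : ℝ → ℝ := fun s => ⟪n, ξ s - z⟫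
  have hf : ∀ s, HasDerivAt f ⟪n, V (ξ s)⟫ s := fun s =>
    (innerSL ℝ n).hasFDerivAt.comp_hasDerivAt s ((hξ s).sub_const z)
  have hslope : ∀ s ∈ Icc (s₀ - a) (s₀ + a), ‖n‖ * (‖n‖ - K ^ 2 * a) ≤ ⟪n, V (ξ s)⟫ := by
    intro s hs
    have hVs : ‖V (ξ s) - n‖ ≤ K ^ 2 * a := calc
      ‖V (ξ s) - n‖ ≤ K * (K * |s - s₀|) := by
        refine (hV.norm_sub_le _ _).trans (mul_le_mul_of_nonneg_left ?_ K.2)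
        simpa [dist_eq_norm, Real.dist_eq] using hξL.dist_le_mul s s₀
      _ ≤ K ^ 2 * a := by
        rw [← mul_assoc, ← sq]
        gcongr
        exact abs_sub_le_iff.2 ⟨by linarith [hs.2], by linarith [hs.1]⟩
    have hinner : ⟪n, V (ξ s)⟫ = ‖n‖ ^ 2 + ⟪n, V (ξ s) - n⟫ := by
      rw [inner_sub_right, real_inner_self_eq_norm_sq]; ring
    have := (abs_le.1 ((abs_real_inner_le_norm n (V (ξ s) - n)).trans
      (mul_le_mul_of_nonneg_left hVs (norm_nonneg n)))).1
    nlinarith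
  have hgrowth := (convex_Icc (s₀ - a) (s₀ + a)).mul_sub_le_image_sub_of_le_deriv
    (fun s _ => (hf s).continuousAt.continuousWithinAt)
    (fun s _ => (hf s).differentiableAt.differentiableWithinAt)
    (fun s hs => (hf s).deriv ▸ hslope s (interior_subset hs))
  have hmem : s₀ ∈ Icc (s₀ - a) (s₀ + a) := ⟨by linarith, by linarith⟩
  have hleft := hgrowth (s₀ - a) ⟨le_rfl, by linarith⟩ s₀ hmem (by linarith)
  have hright := hgrowth s₀ hmem (s₀ + a) ⟨by linarith, le_rfl⟩ (by linarith)
  have hf₀ : |f s₀| ≤ ‖n‖ * ρ := (abs_real_inner_le_norm _ _).trans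
    (mul_le_mul_of_nonneg_left (by rwa [norm_sub_rev]) (norm_nonneg n))
  -- `a = 2ρ/m` makes the gain `a (m - K² a)` over time `a` at least the initial offset `ρ`
  have hgain : ρ ≤ a * (‖n‖ - K ^ 2 * a) := by
    have hKa : K ^ 2 * a ^ 2 ≤ ρ := by
      rw [div_pow, mul_div_assoc', div_le_iff₀ (by positivity)]; nlinarith
    have : a * m = 2 * ρ := div_mul_cancel₀ _ hm.ne'
    nlinarith [mul_le_mul_of_nonneg_left hVm ha0]
  have hgain' := mul_le_mul_of_nonneg_left hgain (norm_nonneg n)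
  have hzero : (0 : ℝ) ∈ Icc (f (s₀ - a)) (f (s₀ + a)) :=
    ⟨by nlinarith [(abs_le.1 hf₀).2], by nlinarith [(abs_le.1 hf₀).1]⟩
  obtain ⟨s, hs, hfs⟩ := intermediate_value_Icc (by linarith : s₀ - a ≤ s₀ + a)
    (fun s _ => (hf s).continuousAt.continuousWithinAt) hzero
  exact ⟨s, abs_sub_le_iff.2 ⟨by linarith [hs.2], by linarith [hs.1]⟩, hfs⟩

end Flow

/-- `planarCross w v = v₀ w₁ − v₁ w₀` is the cross product `v × w`; a stream function `H` of `V`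
has derivative `planarCross (V z)` at `z`. -/
def planarCross (w : E2) : E2 →L[ℝ] ℝ :=
  w 1 • EuclideanSpace.proj 0 - w 0 • EuclideanSpace.proj 1

@[simp]
theorem planarCross_apply (w v : E2) : planarCross w v = v 0 * w 1 - v 1 * w 0 := by
  simp [planarCross]; ring

theorem planarCross_self (v : E2) : planarCross v v = 0 := by
  rw [planarCross_apply]; ring

theorem planarCross_sub (w w' : E2) : planarCross w - planarCross w' = planarCross (w - w') := by
  ext v; simp only [sub_apply, planarCross_apply, PiLp.sub_apply]; ring

theorem E2.norm_sq (v : E2) : ‖v‖ ^ 2 = v 0 ^ 2 + v 1 ^ 2 := by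
  simp [EuclideanSpace.norm_sq_eq, Fin.sum_univ_two]

theorem E2.inner_eq_s15 (v w : E2) : ⟪v, w⟫ = v 0 * w 0 + v 1 * w 1 := by
  simp [PiLp.inner_apply, Fin.sum_univ_two, mul_comm]

theorem inner_sq_add_planarCross_sq (v w : E2) :
    ⟪v, w⟫ ^ 2 + planarCross w v ^ 2 = ‖v‖ ^ 2 * ‖w‖ ^ 2 := by
  rw [E2.inner_eq_s15, planarCross_apply, E2.norm_sq, E2.norm_sq]; ring

theorem abs_planarCross_le (w v : E2) : |planarCross w v| ≤ ‖v‖ * ‖w‖ := by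
  apply abs_le_of_sq_le_sq _ (by positivity)
  nlinarith [inner_sq_add_planarCross_sq v w, sq_nonneg ⟪v, w⟫]

theorem abs_planarCross_of_inner_eq_zero {v w : E2} (h : ⟪v, w⟫ = 0) :
    |planarCross w v| = ‖v‖ * ‖w‖ := by
  have := inner_sq_add_planarCross_sq v w
  rw [h, ← mul_pow, ← sq_abs] at this
  exact (pow_left_inj₀ (abs_nonneg _) (by positivity) two_ne_zero).mp (by simpa using this)

theorem norm_planarCross_le (w : E2) : ‖planarCross w‖ ≤ ‖w‖ :=
  ContinuousLinearMap.opNorm_le_bound _ (norm_nonneg w) fun v => by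
    rw [Real.norm_eq_abs, mul_comm]; exact abs_planarCross_le w v

theorem IsStreamFunction.hasFDerivAt {V : E2 → E2} {H : E2 → ℝ} (hH : IsStreamFunction V H)
    (z : E2) : HasFDerivAt H (planarCross (V z)) z := by
  convert (hH.2.1 z).hasFDerivAt using 1
  refine ContinuousLinearMap.ext fun v => ?_
  have hv : v = v 0 • EuclideanSpace.single 0 1 + v 1 • EuclideanSpace.single 1 1 := by
    ext i; fin_cases i <;> simp
  obtain ⟨h0, h1⟩ := hH.2.2.2 z
  rw [hv, map_add, map_add, map_smul, map_smul, map_smul, map_smul, planarCross_apply,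
    planarCross_apply, h0, h1]
  simp

section StreamFunction

variable {V : E2 → E2} {H : E2 → ℝ} {K : NNReal}

theorem IsOrbit.apply_eq_apply (hH : ∀ z, HasFDerivAt H (planarCross (V z)) z)
    {ξ : ℝ → E2} (hξ : IsOrbit V ξ) (s t : ℝ) : H (ξ s) = H (ξ t) := by
  have hderiv : ∀ s, HasDerivAt (H ∘ ξ) 0 s := fun s => by
    simpa only [planarCross_self] using (hH (ξ s)).comp_hasDerivAt s (hξ s)
  exact is_const_of_deriv_eq_zero (fun s => (hderiv s).differentiableAt)
    (fun s => (hderiv s).deriv) s t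

-- Mean value inequality for `H - planarCross (V q)`, whose derivative
-- `planarCross (V u - V q)` is small near `q`.
theorem norm_sub_mul_le_abs_sub_of_inner_eq_zero (hH : ∀ z, HasFDerivAt H (planarCross (V z)) z)
    (hV : LipschitzWith K V) {p z q : E2} {δ : ℝ} (hp : p ∈ closedBall q δ)
    (hz : z ∈ closedBall q δ) (horth : ⟪V q, z - p⟫ = 0) :
    ‖z - p‖ * (‖V q‖ - K * δ) ≤ |H z - H p| := by
  have hbound : ∀ u ∈ closedBall q δ, ‖planarCross (V u) - planarCross (V q)‖ ≤ K * δ :=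
    fun u hu => by
      rw [planarCross_sub]
      exact (norm_planarCross_le _).trans
        ((hV.norm_sub_le u q).trans (mul_le_mul_of_nonneg_left (mem_closedBall_iff_norm.1 hu) K.2))
  have hmvt := (convex_closedBall q δ).norm_image_sub_le_of_norm_hasFDerivWithin_le'
    (fun u _ => (hH u).hasFDerivWithinAt) hbound hp hz
  have hcross : |planarCross (V q) (z - p)| = ‖z - p‖ * ‖V q‖ :=
    abs_planarCross_of_inner_eq_zero (by rwa [real_inner_comm])
  rw [Real.norm_eq_abs] at hmvt
  have := abs_sub_abs_le_abs_sub (planarCross (V q) (z - p)) (H z - H p)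
  rw [abs_sub_comm (planarCross _ _)] at this
  rw [mul_sub]
  linarith

theorem exists_norm_sub_orbit_mul_le (hH : ∀ z, HasFDerivAt H (planarCross (V z)) z)
    (hV : LipschitzWith K V) (hbound : ∀ z, ‖V z‖ ≤ K) {ξ : ℝ → E2} (hξ : IsOrbit V ξ)
    {z : E2} {s₀ ρ m : ℝ} (hm : 0 < m) (hz : ‖z - ξ s₀‖ ≤ ρ) (hVm : m ≤ ‖V (ξ s₀)‖)
    (hρ : 4 * K ^ 2 * ρ ≤ m ^ 2) :
    ∃ s, ‖z - ξ s‖ * (m - K * (ρ + K * (2 * ρ / m))) ≤ |H z - H (ξ s₀)| := by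
  have hξL := lipschitzWith_of_hasDerivAt_flow hξ hbound
  obtain ⟨s, hs, horth⟩ := exists_inner_flow_sub_eq_zero hξ hV hξL hm hz hVm hρ
  have hρ0 : 0 ≤ ρ := (norm_nonneg _).trans hz
  have hKa : 0 ≤ K * (2 * ρ / m) := by positivity
  have hp : ξ s ∈ closedBall (ξ s₀) (ρ + K * (2 * ρ / m)) := by
    rw [mem_closedBall, ← Real.dist_eq] at *
    linarith [(hξL.dist_le_mul s s₀).trans (mul_le_mul_of_nonneg_left hs K.2)]
  have hz' : z ∈ closedBall (ξ s₀) (ρ + K * (2 * ρ / m)) := by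
    rw [mem_closedBall, dist_eq_norm]; linarith
  refine ⟨s, ?_⟩
  rw [hξ.apply_eq_apply hH s₀ s]
  refine le_trans ?_ (norm_sub_mul_le_abs_sub_of_inner_eq_zero hH hV hp hz' ?_)
  · gcongr
  · rw [← neg_sub, inner_neg_right, horth, neg_zero]

theorem exists_norm_sub_orbit_le_of_infDist_lt (hH : ∀ z, HasFDerivAt H (planarCross (V z)) z)
    (hV : LipschitzWith K V) (hbound : ∀ z, ‖V z‖ ≤ K) {ξ : ℝ → E2} (hξ : IsOrbit V ξ)
    {z : E2} {c ρ : ℝ} (hc : 0 < c) (hρ : 8 * K ^ 2 * ρ ≤ c ^ 2) (hVz : c < ‖V z‖)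
    (hdist : infDist z (range ξ) < ρ) :
    ∃ s, ‖z - ξ s‖ ≤ 4 * |H z - H (ξ 0)| / c := by
  obtain ⟨_, ⟨s₀, rfl⟩, hzs₀⟩ := (infDist_lt_iff (range_nonempty ξ)).1 hdist
  rw [dist_eq_norm] at hzs₀
  have hcK : c ≤ K := hVz.le.trans (hbound z)
  have hKρ : K * ρ ≤ c / 8 := by nlinarith
  have hVm : 7 * c / 8 ≤ ‖V (ξ s₀)‖ := by
    have := (norm_sub_norm_le (V z) (V (ξ s₀))).trans (hV.norm_sub_le z (ξ s₀))
    nlinarith [mul_le_mul_of_nonneg_left hzs₀.le K.2]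
  obtain ⟨s, hs⟩ := exists_norm_sub_orbit_mul_le hH hV hbound hξ (by positivity) hzs₀.le hVm
    (by nlinarith)
  have hrate : c / 4 ≤ 7 * c / 8 - K * (ρ + K * (2 * ρ / (7 * c / 8))) := by
    have : K * (K * (2 * ρ / (7 * c / 8))) ≤ 2 * c / 7 := by
      rw [← mul_assoc, mul_div_assoc', div_le_iff₀ (by positivity)]; nlinarith
    nlinarith
  rw [hξ.apply_eq_apply hH s₀ 0] at hs
  refine ⟨s, ?_⟩
  rw [le_div_iff₀ hc]
  nlinarith [mul_le_mul_of_nonneg_left hrate (norm_nonneg (z - ξ s))]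

theorem exists_norm_le_of_near_level (hH : ∀ z, HasFDerivAt H (planarCross (V z)) z)
    (hV : LipschitzWith K V) (hbound : ∀ z, ‖V z‖ ≤ K) {θ c : ℝ} (hθ : 0 < θ) (hc : 0 < c)
    (hcθ : 96 * K ^ 2 * θ ≤ c ^ 3) {x y : E2} (hxy : H x = H y) {ξ : ℝ → E2}
    (hξ : IsOrbitThrough V ξ x) (hy : y ∉ range ξ) {T : ℝ} (hT : 0 ≤ T) {γ : ℝ → E2}
    (hγc : ContinuousOn γ (Icc 0 T)) (hγ0 : γ 0 = x) (hγT : γ T = y)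
    (hmax : ∀ t ∈ Icc (0:ℝ) T, |H (γ t) - H x| ≤ θ) :
    ∃ t₀ ∈ Icc (0:ℝ) T, ‖V (γ t₀)‖ ≤ c := by
  obtain ⟨hξ, rfl⟩ := hξ
  by_contra! hfast
  set ρ := 12 * θ / c
  have hρ0 : 0 < ρ := by positivity
  have hρ : 8 * K ^ 2 * ρ ≤ c ^ 2 := by
    rw [mul_div_assoc', div_le_iff₀ hc]; nlinarith
  have hclose : ∀ t ∈ Icc 0 T, infDist (γ t) (range ξ) ≤ ρ / 3 := by
    refine isPreconnected_Icc.forall_le_of_forall_lt_imp_le (r := ρ / 3) (R := ρ)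
      ((continuous_infDist_pt _).comp_continuousOn hγc) (left_mem_Icc.2 hT) (by linarith)
      ?_ fun t ht hdist => ?_
    · change infDist (γ 0) (range ξ) ≤ ρ / 3
      rw [hγ0, infDist_zero_of_mem (mem_range_self 0)]; positivity
    obtain ⟨s, hs⟩ :=
      exists_norm_sub_orbit_le_of_infDist_lt hH hV hbound hξ hc hρ (hfast t ht) hdist
    calc infDist (γ t) (range ξ) ≤ ‖γ t - ξ s‖ :=
          dist_eq_norm (γ t) _ ▸ infDist_le_dist_of_mem ⟨s, rfl⟩
      _ ≤ 4 * θ / c := hs.trans (by gcongr; exact hmax t ht)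
      _ = ρ / 3 := by ring
  obtain ⟨s, hs⟩ := exists_norm_sub_orbit_le_of_infDist_lt hH hV hbound hξ hc hρ
    (hfast T (right_mem_Icc.2 hT)) ((hclose T (right_mem_Icc.2 hT)).trans_lt (by linarith))
  rw [hγT, ← hxy, sub_self, abs_zero, mul_zero, zero_div, norm_le_zero_iff, sub_eq_zero] at hs
  exact hy ⟨s, hs.symm⟩

end StreamFunction

theorem statement15_general
    (V : E2 → E2) (K₀ : NNReal) (hLip : LipschitzWith K₀ V)
    (hbound : ∀ x : E2, ‖V x‖ ≤ (K₀ : ℝ))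
    (H : E2 → ℝ) (hH : IsStreamFunction V H)
    (θ : ℝ) (hθ : 0 < θ)
    (x y : E2) (hxy : H x = H y)
    (ξ : ℝ → E2) (hξ : IsOrbitThrough V ξ x) (hy : y ∉ range ξ)
    (T : ℝ) (hT : 0 ≤ T) (γ : ℝ → E2) (hγc : ContinuousOn γ (Icc 0 T))
    (hγ0 : γ 0 = x) (hγT : γ T = y)
    (hmax : ∀ t ∈ Icc (0:ℝ) T, |H (γ t) - H x| ≤ θ) :
    ∃ t₀ ∈ Icc (0:ℝ) T, ‖V (γ t₀)‖ ≤ 3 * ((K₀ : ℝ) + 1) * θ ^ ((1:ℝ)/3) := by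
  refine exists_norm_le_of_near_level hH.hasFDerivAt hLip hbound hθ (by positivity) ?_ hxy hξ hy
    hT hγc hγ0 hγT hmax
  have hcube : (θ ^ ((1:ℝ)/3)) ^ 3 = θ := by
    simpa using Real.rpow_inv_natCast_pow hθ.le (n := 3) (by norm_num)
  rw [mul_pow, hcube]
  have hK : 32 * (K₀ : ℝ) ^ 2 ≤ 9 * (K₀ + 1) ^ 3 := by
    have := K₀.coe_nonneg
    nlinarith [mul_nonneg this (sq_nonneg ((K₀ : ℝ) - 1))]
  nlinarith

/-- Lemma 2.10. If `H(x) = H(y)`, `y` is not on the orbit of `x`, and a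
continuous curve `γ` from `x` to `y` stays within `θ` of the level `H(x)`, then somewhere
along `γ` the speed `|V|` is at most `3(K₀+1)·θ^{1/3}`. -/
theorem statement15
    (V : E2 → E2) (K₀ : NNReal) (hLip : LipschitzWith K₀ V)
    (hbound : ∀ x : E2, ‖V x‖ ≤ (K₀ : ℝ)) (hper : ZPeriodic V)
    (H : E2 → ℝ) (hH : IsStreamFunction V H)
    (θ : ℝ) (hθ : 0 < θ)
    (x y : E2) (hxy : H x = H y)
    (ξ : ℝ → E2) (hξ : IsOrbitThrough V ξ x) (hy : y ∉ range ξ)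
    (T : ℝ) (hT : 0 ≤ T) (γ : ℝ → E2) (hγc : ContinuousOn γ (Icc 0 T))
    (hγ0 : γ 0 = x) (hγT : γ T = y)
    (hmax : ∀ t ∈ Icc (0:ℝ) T, |H (γ t) - H x| ≤ θ) :
    ∃ t₀ ∈ Icc (0:ℝ) T, ‖V (γ t₀)‖ ≤ 3 * ((K₀ : ℝ) + 1) * θ ^ ((1:ℝ)/3) :=
  statement15_general V K₀ hLip hbound H hH θ hθ x y hxy ξ hξ hy T hT γ hγc hγ0 hγT hmax

end
end

section
/- There exist absolute constants c > 0 and C > 0 such that the following holds for the two-dimensional cellular flow. (a) For every A ≥ 2, every k ∈ ℤ, every T > 0, and every A-admissible control path γ = (γ₁,γ₂) : [0,T] → ℝ² with γ₁(0) = k and γ₁(T) = k + 1, one has T ≥ c·log A / A. (b) Consequently, for every A ≥ 2 and for p = (±1,0) or p = (0,±1), the turbulent flame speed satisfies s_T(p,A) ≤ C·A / log A. -/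
open MeasureTheory Filter Topology Set Metric Bornology

noncomputable section

/-- the two-dimensional cellular flow `V = (−H_{x₂}, H_{x₁})` for the stream function
`H(x) = sin(2πx₁)·sin(2πx₂)`. -/
def cellV : E2 → E2 := fun x =>
  WithLp.toLp 2 ![ -(2 * Real.pi * Real.sin (2 * Real.pi * x 0) * Real.cos (2 * Real.pi * x 1)),
     2 * Real.pi * Real.cos (2 * Real.pi * x 0) * Real.sin (2 * Real.pi * x 1) ]

/-!
A coordinate `s` of an `A`-admissible path moves with speed at most `1 + 2πA|sin 2πs|`, because
`|V_i(x)| ≤ 2π|sin 2πx_i|`. Measured in the travel time `F_A(x) = ∫₀ˣ (1 + 2πA|sin 2πs|)⁻¹ ds`,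
every coordinate therefore moves at most at unit rate. Crossing one cell costs
`F_A(1) ≥ ∫₀¹ (1 + 4π²As)⁻¹ ds = log(1 + 4π²A)/(4π²A) ≥ log A/(40A)`, which is (a); by
periodicity, in time `t` a coordinate moves by at most `t/F_A(1) + 1`, which is (b).
-/

open Real

theorem abs_sub_le_mul_of_lipschitzOnWith_of_ae_abs_deriv_le {f : ℝ → ℝ} {a b C : ℝ} {K : NNReal}
    (hab : a ≤ b) (hf : LipschitzOnWith K f (Icc a b))
    (hderiv : ∀ᵐ s, s ∈ Icc a b → ∃ d, HasDerivAt f d s ∧ |d| ≤ C) :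
    |f b - f a| ≤ C * (b - a) := by
  rw [← uIcc_of_le hab] at hf
  rw [← hf.absolutelyContinuousOnInterval.integral_deriv_eq_sub, ← Real.norm_eq_abs]
  calc ‖∫ s in a..b, deriv f s‖ ≤ ∫ _ in a..b, C := by
        refine intervalIntegral.norm_integral_le_of_norm_le hab ?_ intervalIntegrable_const
        filter_upwards [hderiv] with s hs hmem
        obtain ⟨d, hd, hdC⟩ := hs (Ioc_subset_Icc_self hmem)
        rwa [hd.deriv, Real.norm_eq_abs]
    _ = C * (b - a) := by rw [intervalIntegral.integral_const, smul_eq_mul, mul_comm]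

def slowness (A s : ℝ) : ℝ := (1 + 2 * π * A * |sin (2 * π * s)|)⁻¹

def travelTime (A x : ℝ) : ℝ := ∫ s in (0:ℝ)..x, slowness A s

section travelTime

variable {A : ℝ}

theorem one_add_mul_abs_sin_pos (hA : 0 ≤ A) (s : ℝ) : 0 < 1 + 2 * π * A * |sin (2 * π * s)| := by
  positivity

theorem slowness_pos (hA : 0 ≤ A) (s : ℝ) : 0 < slowness A s :=
  inv_pos.2 (one_add_mul_abs_sin_pos hA s)

theorem slowness_le_one (hA : 0 ≤ A) (s : ℝ) : slowness A s ≤ 1 :=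
  inv_le_one_of_one_le₀ (le_add_of_nonneg_right (by positivity))

theorem continuous_slowness (hA : 0 ≤ A) : Continuous (slowness A) :=
  Continuous.inv₀ (by fun_prop) fun s => (one_add_mul_abs_sin_pos hA s).ne'

theorem periodic_slowness : Function.Periodic (slowness A) 1 := by
  intro s
  simp only [slowness, mul_add, mul_one, sin_add_two_pi]

theorem intervalIntegrable_slowness (hA : 0 ≤ A) (a b : ℝ) :
    IntervalIntegrable (slowness A) volume a b :=
  (continuous_slowness hA).intervalIntegrable a b

theorem hasDerivAt_travelTime (hA : 0 ≤ A) (x : ℝ) : HasDerivAt (travelTime A) (slowness A x) x :=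
  (continuous_slowness hA).integral_hasStrictDerivAt 0 x |>.hasDerivAt

theorem lipschitzWith_travelTime (hA : 0 ≤ A) : LipschitzWith 1 (travelTime A) :=
  lipschitzWith_of_nnnorm_deriv_le (fun x => (hasDerivAt_travelTime hA x).differentiableAt)
    fun x => by
      rw [(hasDerivAt_travelTime hA x).deriv, ← NNReal.coe_le_coe, coe_nnnorm, Real.norm_eq_abs,
        abs_of_pos (slowness_pos hA x)]
      exact slowness_le_one hA x

theorem monotone_travelTime (hA : 0 ≤ A) : Monotone (travelTime A) :=
  monotone_of_deriv_nonneg (fun x => (hasDerivAt_travelTime hA x).differentiableAt)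
    fun x => (hasDerivAt_travelTime hA x).deriv ▸ (slowness_pos hA x).le

theorem travelTime_zero : travelTime A 0 = 0 :=
  intervalIntegral.integral_same

theorem travelTime_add_one (hA : 0 ≤ A) (x : ℝ) :
    travelTime A (x + 1) = travelTime A x + travelTime A 1 := by
  simpa [travelTime] using
    periodic_slowness.intervalIntegral_add_eq_add 0 x (intervalIntegrable_slowness hA)

theorem travelTime_intCast (hA : 0 ≤ A) (n : ℤ) : travelTime A n = n * travelTime A 1 := by
  simpa [travelTime] using
    periodic_slowness.intervalIntegral_add_zsmul_eq n 0 (intervalIntegrable_slowness hA)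

theorem log_div_le_travelTime_one (hA : 2 ≤ A) : log A / (40 * A) ≤ travelTime A 1 := by
  have hA0 : 0 < A := by linarith
  set b := 4 * π ^ 2 * A
  have hb : 0 < b := by positivity
  have hAb : A ≤ b := by
    show A ≤ 4 * π ^ 2 * A; nlinarith [mul_self_lt_mul_self zero_le_three pi_gt_three]
  have hb40 : b ≤ 40 * A := by
    show 4 * π ^ 2 * A ≤ 40 * A; nlinarith [mul_self_lt_mul_self pi_pos.le pi_lt_d2]
  have hcompare : ∀ s ∈ Icc (0:ℝ) 1, (1 + b * s)⁻¹ ≤ slowness A s := fun s hs => by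
    refine inv_anti₀ (one_add_mul_abs_sin_pos hA0.le s) (add_le_add_right ?_ 1)
    calc 2 * π * A * |sin (2 * π * s)| ≤ 2 * π * A * |2 * π * s| :=
          mul_le_mul_of_nonneg_left abs_sin_le_abs (by positivity)
      _ = b * s := by rw [abs_of_nonneg (by have := hs.1; positivity)]; ring
  have hintegral : ∫ s in (0:ℝ)..1, (1 + b * s)⁻¹ = log (1 + b) / b := by
    rw [intervalIntegral.integral_comp_add_mul (f := fun x => x⁻¹) hb.ne' 1, mul_zero, add_zero,
      mul_one, integral_inv_of_pos one_pos (by positivity), div_one, smul_eq_mul, inv_mul_eq_div]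
  calc log A / (40 * A) ≤ log (1 + b) / b := by
        gcongr
        · exact log_nonneg (by linarith)
        · linarith
    _ = ∫ s in (0:ℝ)..1, (1 + b * s)⁻¹ := hintegral.symm
    _ ≤ travelTime A 1 := by
        refine intervalIntegral.integral_mono_on zero_le_one ?_
          (intervalIntegrable_slowness hA0.le _ _) hcompare
        exact ContinuousOn.intervalIntegrable_of_Icc zero_le_one
          (ContinuousOn.inv₀ (by fun_prop) fun s hs => by nlinarith [hs.1])

theorem travelTime_one_pos (hA : 2 ≤ A) : 0 < travelTime A 1 :=
  lt_of_lt_of_le (div_pos (log_pos (by linarith)) (by linarith)) (log_div_le_travelTime_one hA)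

theorem abs_le_abs_travelTime_div_add_one (hA : 2 ≤ A) (x : ℝ) :
    |x| ≤ |travelTime A x| / travelTime A 1 + 1 := by
  have hA0 : 0 ≤ A := by linarith
  have hF1 := travelTime_one_pos hA
  have hfloor : ⌊x⌋ * travelTime A 1 ≤ travelTime A x := by
    rw [← travelTime_intCast hA0]; exact monotone_travelTime hA0 (Int.floor_le x)
  have hceil : travelTime A x ≤ ⌈x⌉ * travelTime A 1 := by
    rw [← travelTime_intCast hA0]; exact monotone_travelTime hA0 (Int.le_ceil x)
  have hlower : (x - 1) * travelTime A 1 ≤ travelTime A x :=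
    (mul_le_mul_of_nonneg_right (by linarith [Int.lt_floor_add_one x]) hF1.le).trans hfloor
  have hupper : travelTime A x ≤ (x + 1) * travelTime A 1 :=
    hceil.trans (mul_le_mul_of_nonneg_right (by linarith [Int.ceil_lt_add_one x]) hF1.le)
  rw [← sub_le_iff_le_add, le_div_iff₀ hF1]
  rcases abs_cases x with ⟨hx, -⟩ | ⟨hx, -⟩ <;> rw [hx] <;>
    linarith [le_abs_self (travelTime A x), neg_abs_le (travelTime A x)]

end travelTime

theorem abs_cellV_apply_le (x : E2) (i : Fin 2) : |cellV x i| ≤ 2 * π * |sin (2 * π * x i)| := by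
  fin_cases i
  · calc |cellV x 0| = 2 * π * |sin (2 * π * x 0)| * |cos (2 * π * x 1)| := by
          simp [cellV, abs_mul, abs_of_pos pi_pos]
      _ ≤ 2 * π * |sin (2 * π * x 0)| := mul_le_of_le_one_right (by positivity) (abs_cos_le_one _)
  · calc |cellV x 1| = 2 * π * |sin (2 * π * x 1)| * |cos (2 * π * x 0)| := by
          simp [cellV, abs_mul, abs_of_pos pi_pos]; ring
      _ ≤ 2 * π * |sin (2 * π * x 1)| := mul_le_of_le_one_right (by positivity) (abs_cos_le_one _)

theorem isAdmissible_zero (A T : ℝ) : IsAdmissible cellV A T 0 := by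
  refine ⟨⟨0, fun x _ y _ => by simp⟩,
    Eventually.of_forall fun s _ => ⟨0, hasDerivAt_const s 0, ?_⟩⟩
  have : cellV 0 = 0 := by ext i; fin_cases i <;> simp [cellV]
  simp [this]

namespace IsAdmissible

variable {A t : ℝ} {γ : ℝ → E2}

theorem ae_abs_deriv_apply_le (hA : 0 ≤ A) (hγ : IsAdmissible cellV A t γ) (i : Fin 2) :
    ∀ᵐ s, s ∈ Icc 0 t →
      ∃ d, HasDerivAt (fun s => γ s i) d s ∧ |d| ≤ (slowness A (γ s i))⁻¹ := by
  filter_upwards [hγ.2] with s hs hmem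
  obtain ⟨g, hg, hbound⟩ := hs hmem
  refine ⟨g i, by exact (EuclideanSpace.proj i).hasFDerivAt.comp_hasDerivAt s hg, ?_⟩
  have hcontrol : |g i + A * cellV (γ s) i| ≤ 1 :=
    (PiLp.norm_apply_le (g + A • cellV (γ s)) i).trans hbound
  have hdrift : |A * cellV (γ s) i| ≤ 2 * π * A * |sin (2 * π * γ s i)| := by
    rw [abs_mul, abs_of_nonneg hA, mul_comm (2 * π), mul_assoc]
    exact mul_le_mul_of_nonneg_left (abs_cellV_apply_le (γ s) i) hA
  rw [slowness, inv_inv]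
  calc |g i| = |(g i + A * cellV (γ s) i) - A * cellV (γ s) i| := by ring_nf
    _ ≤ _ := abs_sub _ _
    _ ≤ _ := add_le_add hcontrol hdrift

theorem abs_travelTime_sub_le (hA : 0 ≤ A) (ht : 0 ≤ t) (hγ : IsAdmissible cellV A t γ)
    (i : Fin 2) : |travelTime A (γ t i) - travelTime A (γ 0 i)| ≤ t := by
  obtain ⟨K, hK⟩ := hγ.1
  have hLip := (lipschitzWith_travelTime hA).comp_lipschitzOnWith
    ((EuclideanSpace.proj (𝕜 := ℝ) i).lipschitz.comp_lipschitzOnWith hK)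
  simpa using abs_sub_le_mul_of_lipschitzOnWith_of_ae_abs_deriv_le ht hLip (C := 1) (by
    filter_upwards [hγ.ae_abs_deriv_apply_le hA i] with s hs hmem
    obtain ⟨d, hd, hbound⟩ := hs hmem
    refine ⟨slowness A (γ s i) * d, (hasDerivAt_travelTime hA _).comp s hd, ?_⟩
    rw [abs_mul, abs_of_pos (slowness_pos hA _)]
    calc slowness A (γ s i) * |d| ≤ slowness A (γ s i) * (slowness A (γ s i))⁻¹ :=
          mul_le_mul_of_nonneg_left hbound (slowness_pos hA _).le
      _ = 1 := mul_inv_cancel₀ (slowness_pos hA _).ne')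

theorem abs_apply_le (hA : 2 ≤ A) (ht : 0 ≤ t) (hγ : IsAdmissible cellV A t γ) (hγ0 : γ 0 = 0)
    (i : Fin 2) : |γ t i| ≤ t / travelTime A 1 + 1 := by
  have htravel := hγ.abs_travelTime_sub_le (by linarith) ht i
  rw [hγ0, PiLp.zero_apply, travelTime_zero, sub_zero] at htravel
  calc |γ t i| ≤ |travelTime A (γ t i)| / travelTime A 1 + 1 :=
        abs_le_abs_travelTime_div_add_one hA _
    _ ≤ t / travelTime A 1 + 1 := by
        gcongr
        exact (travelTime_one_pos hA).le

end IsAdmissible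

theorem exists_neg_inner_le_abs_apply {p : E2}
    (hp : p = (WithLp.toLp 2 ![1, 0] : E2) ∨ p = (WithLp.toLp 2 ![-1, 0] : E2) ∨
      p = (WithLp.toLp 2 ![0, 1] : E2) ∨ p = (WithLp.toLp 2 ![0, -1] : E2)) (x : E2) :
    ∃ i, -inner ℝ p x ≤ |x i| := by
  rcases hp with rfl | rfl | rfl | rfl
  · exact ⟨0, by simpa [PiLp.inner_apply, Fin.sum_univ_two] using neg_le_abs (x 0)⟩
  · exact ⟨0, by simpa [PiLp.inner_apply, Fin.sum_univ_two] using le_abs_self (x 0)⟩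
  · exact ⟨1, by simpa [PiLp.inner_apply, Fin.sum_univ_two] using neg_le_abs (x 1)⟩
  · exact ⟨1, by simpa [PiLp.inner_apply, Fin.sum_univ_two] using le_abs_self (x 1)⟩

theorem sT_cellV_le {A : ℝ} (hA : 2 ≤ A) {p : E2} (hp : ∀ x : E2, ∃ i, -inner ℝ p x ≤ |x i|) :
    sT cellV p A ≤ (travelTime A 1)⁻¹ + 1 := by
  set reach : ℝ → Set ℝ := fun t =>
    {r | ∃ γ : ℝ → E2, IsAdmissible cellV A t γ ∧ γ 0 = 0 ∧ r = -inner ℝ p (γ t)}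
  have hF1 := travelTime_one_pos hA
  have hreach : ∀ t, 0 ≤ t → ∀ r ∈ reach t, r ≤ t / travelTime A 1 + 1 := by
    rintro t ht r ⟨γ, hγ, hγ0, rfl⟩
    obtain ⟨i, hi⟩ := hp (γ t)
    exact hi.trans (hγ.abs_apply_le hA ht hγ0 i)
  have hbounds : ∀ᶠ t in atTop,
      0 ≤ 1 / t * sSup (reach t) ∧ 1 / t * sSup (reach t) ≤ (travelTime A 1)⁻¹ + 1 := by
    filter_upwards [eventually_ge_atTop 1] with t ht
    have hsup_nonneg : 0 ≤ sSup (reach t) :=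
      le_csSup ⟨_, hreach t (by linarith)⟩ ⟨0, isAdmissible_zero A t, rfl, by simp⟩
    refine ⟨by positivity, ?_⟩
    calc _ ≤ 1 / t * (t / travelTime A 1 + 1) := by
          gcongr; exact Real.sSup_le (hreach t (by linarith)) (by positivity)
      _ = (travelTime A 1)⁻¹ + 1 / t := by field_simp
      _ ≤ (travelTime A 1)⁻¹ + 1 := by gcongr; exact div_le_one_of_le₀ ht (by linarith)
  exact limsup_le_of_le (isCoboundedUnder_le_of_eventually_le _ (hbounds.mono fun _ h => h.1))
    (hbounds.mono fun _ h => h.2)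

theorem inv_travelTime_one_add_one_le {A : ℝ} (hA : 2 ≤ A) :
    (travelTime A 1)⁻¹ + 1 ≤ 41 * A / log A := by
  have hlog : 0 < log A := log_pos (by linarith)
  have hinv : (travelTime A 1)⁻¹ ≤ 40 * A / log A := by
    rw [← inv_div]
    exact inv_anti₀ (by positivity) (log_div_le_travelTime_one hA)
  have hone : 1 ≤ A / log A := by
    rw [le_div_iff₀ hlog, one_mul]
    linarith [log_le_sub_one_of_pos (by linarith : 0 < A)]
  linarith [show 41 * A / log A = 40 * A / log A + A / log A by ring]

/-- For the cellular flow: (a) any `A`-admissible control path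
(`A ≥ 2`) crossing a vertical strip of width one between integer lines takes time at
least `c·log A / A`; (b) consequently `s_T(p,A) ≤ C·A / log A` for
`p = (±1,0), (0,±1)`. -/
theorem statement18 :
    ∃ c > (0:ℝ), ∃ C > (0:ℝ),
      (∀ A : ℝ, 2 ≤ A → ∀ k : ℤ, ∀ T : ℝ, 0 < T → ∀ γ : ℝ → E2,
        IsAdmissible cellV A T γ → γ 0 0 = (k : ℝ) → γ T 0 = (k : ℝ) + 1 →
        c * Real.log A / A ≤ T) ∧
      (∀ A : ℝ, 2 ≤ A → ∀ p : E2,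
        (p = (WithLp.toLp 2 ![1, 0] : E2) ∨ p = (WithLp.toLp 2 ![-1, 0] : E2) ∨
         p = (WithLp.toLp 2 ![0, 1] : E2) ∨ p = (WithLp.toLp 2 ![0, -1] : E2)) →
        sT cellV p A ≤ C * A / Real.log A) := by
  refine ⟨1 / 40, by norm_num, 41, by norm_num, ?_, ?_⟩
  · intro A hA k T hT γ hγ hstart hend
    have htravel := hγ.abs_travelTime_sub_le (by linarith) hT.le 0
    rw [hstart, hend, travelTime_add_one (by linarith), add_sub_cancel_left] at htravel
    calc 1 / 40 * log A / A = log A / (40 * A) := by ring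
      _ ≤ travelTime A 1 := log_div_le_travelTime_one hA
      _ ≤ T := (le_abs_self _).trans htravel
  · intro A hA p hp
    exact (sT_cellV_le hA (exists_neg_inner_le_abs_apply hp)).trans
      (inv_travelTime_one_add_one_le hA)

end
end

section
/- The vector field V of the modified cellular flow is C^∞ on ℝ² ∖ (½ℤ)², and there exist constants C > 0 and C' > 0 such that: (a) for every x ∈ ℝ² ∖ (½ℤ)², |∂H/∂x₁(x)| ≤ C·|sin(2πx₂)|·√(−log(|sin(2πx₂)|/2)) and |∂H/∂x₂(x)| ≤ C·|sin(2πx₁)|·√(−log(|sin(2πx₁)|/2)); and (b) V is ½-log-Lipschitz continuous on ℝ²: |V(x) − V(y)| ≤ C'·|x − y|·(−log|x − y|)^{1/2} for all x, y ∈ ℝ² with 0 < |x − y| ≤ 1/2. -/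
open MeasureTheory Filter Topology Set Metric Bornology

noncomputable section

/-- the half-integer lattice `(½ℤ)²`. -/
def halfLattice : Set E2 :=
  {x | (∃ k : ℤ, x 0 = (k : ℝ) / 2) ∧ (∃ k : ℤ, x 1 = (k : ℝ) / 2)}

/-- the stream function of the modified (½-log-Lipschitz) cellular flow,
`H(x) = sin(2πx₁)·sin(2πx₂)·√(−log((sin²(2πx₁) + sin²(2πx₂))/4))`, extended by `0`
on `(½ℤ)²` (where the formula itself vanishes). -/
def modH : E2 → ℝ := fun x =>
  Real.sin (2 * Real.pi * x 0) * Real.sin (2 * Real.pi * x 1) *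
    Real.sqrt (- Real.log
      (((Real.sin (2 * Real.pi * x 0)) ^ 2 + (Real.sin (2 * Real.pi * x 1)) ^ 2) / 4))

open scoped Classical in
/-- the modified cellular flow `V = (−H_{x₂}, H_{x₁})` off `(½ℤ)²`, extended by `0`
on `(½ℤ)²`. -/
def modV : E2 → E2 := fun x =>
  if x ∈ halfLattice then 0 else
    WithLp.toLp 2 ![ -(fderiv ℝ modH x (EuclideanSpace.single 1 1)),
       fderiv ℝ modH x (EuclideanSpace.single 0 1) ]

/-!
With `a = sin 2πx₁`, `b = sin 2πx₂` and `ψ u = √(-log (u / 4))`, the stream function is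
`F a b = a b ψ(a² + b²)`. On `0 < u ≤ 2` one has `ψ u ≥ 1/√2`, hence `u |ψ' u| ≤ ψ u` and
`u² |ψ'' u| ≤ 2 ψ u`; so `∂ₐF = O(|b| ψ)` while all second derivatives of `F`, and hence of
`H`, are `O(ψ(a² + b²))`. The first bound gives (a), because `ψ(a² + b²) ≤ √2 √(-log (|b| / 2))`.

For (b), let `h = |x - y|` and `σ = max(|a|, |b|)`, a `2π`-Lipschitz function of the point.
If `σ(x) ≥ 4πh`, then `σ ≥ 2h` on the segment `[x, y]`, so `|D²H| = O(√(-log h))` there and the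
mean value theorem applies. Otherwise `σ = O(h)` at both points, and `|V| = O(σ √(-log (σ / 2)))`
is `O(h √(-log h))` at each of them.
-/

namespace ModifiedCellularFlow

open Real

lemma sqrt_add_le_add_sqrt {a b : ℝ} (ha : 0 ≤ a) (hb : 0 ≤ b) : √(a + b) ≤ √a + √b := by
  rw [sqrt_le_left (by positivity)]
  nlinarith [sq_sqrt ha, sq_sqrt hb, sqrt_nonneg a, sqrt_nonneg b]

lemma mul_sqrt_neg_log_le_one {τ : ℝ} (h0 : 0 < τ) (h1 : τ ≤ 1) : τ * √(-log τ) ≤ 1 := by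
  have hτlog := abs_log_mul_self_lt τ h0 h1
  rw [abs_lt] at hτlog
  refine (pow_le_one_iff_of_nonneg (by positivity) two_ne_zero).1 ?_
  rw [mul_pow, sq_sqrt (neg_nonneg.2 (log_nonpos h0.le h1))]
  nlinarith

lemma mul_sqrt_neg_log_le {s h K : ℝ} (hs : 0 ≤ s) (hK : 2 ≤ K) (hsK : s ≤ K * h) (h0 : 0 < h)
    (hh : h ≤ 1 / 2) : s * √(-log (s / 2)) ≤ 3 * K * (h * √(-log h)) := by
  rcases hs.eq_or_lt with rfl | hs
  · simp only [zero_mul]; positivity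
  have hlogh : 1 / 4 ≤ -log h := by
    have := log_le_log h0 hh
    rw [one_div, log_inv] at this
    linarith [log_two_gt_d9]
  have hsqrth : 1 ≤ 2 * √(-log h) := by
    have := sqrt_le_sqrt hlogh
    rw [show (1 / 4 : ℝ) = (1 / 2) ^ 2 by norm_num, sqrt_sq (by norm_num)] at this
    linarith
  set τ := s / (K * h) with hτ
  have hτ0 : 0 < τ := by positivity
  have hτ1 : τ ≤ 1 := (div_le_one (by positivity)).2 hsK
  have hlog : -log (s / 2) ≤ -log τ + -log h := by
    have hsplit : s / 2 = τ * (K * h / 2) := by rw [hτ]; field_simp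
    rw [hsplit, log_mul hτ0.ne' (by positivity)]
    linarith [log_le_log h0 (by nlinarith : h ≤ K * h / 2)]
  calc s * √(-log (s / 2))
      ≤ s * (√(-log τ) + √(-log h)) := by
        gcongr
        exact (sqrt_le_sqrt hlog).trans
          (sqrt_add_le_add_sqrt (neg_nonneg.2 (log_nonpos hτ0.le hτ1)) (by linarith))
    _ = K * h * (τ * √(-log τ)) + s * √(-log h) := by rw [hτ]; field_simp
    _ ≤ K * h * 1 + K * h * √(-log h) := by
        gcongr
        exact mul_sqrt_neg_log_le_one hτ0 hτ1
    _ ≤ 3 * K * (h * √(-log h)) := by nlinarith [mul_pos (by linarith : (0:ℝ) < K) h0]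

lemma max_abs_sq_le (a b : ℝ) : max |a| |b| ^ 2 ≤ a ^ 2 + b ^ 2 := by
  rcases max_cases |a| |b| with ⟨h, -⟩ | ⟨h, -⟩ <;> rw [h, sq_abs] <;>
    linarith [sq_nonneg a, sq_nonneg b]

lemma fderiv_apply_single_eq {ι : Type*} [Fintype ι] [DecidableEq ι]
    {f : EuclideanSpace ℝ ι → ℝ} {g : ℝ → ℝ} {x : EuclideanSpace ℝ ι} {i : ι} {c : ℝ}
    (hf : DifferentiableAt ℝ f x) (hfg : ∀ t, f (x + t • EuclideanSpace.single i 1) = g (x i + t))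
    (hg : HasDerivAt g c (x i)) :
    fderiv ℝ f x (EuclideanSpace.single i 1) = c := by
  rw [← hf.lineDeriv_eq_fderiv, lineDeriv, funext hfg]
  exact (HasDerivAt.comp_const_add (x i) 0 (by rwa [add_zero])).deriv

lemma norm_le_sum_abs_apply {ι : Type*} [Fintype ι] (w : EuclideanSpace ℝ ι) :
    ‖w‖ ≤ ∑ k, |w k| := by
  classical
  conv_lhs => rw [← (EuclideanSpace.basisFun ι ℝ).sum_repr w]
  refine (norm_sum_le _ _).trans_eq (Finset.sum_congr rfl fun k _ => ?_)
  simp [norm_smul]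

lemma opNorm_le_sum_abs_apply_single {ι : Type*} [Fintype ι] [DecidableEq ι]
    (D : EuclideanSpace ℝ ι →L[ℝ] ℝ) : ‖D‖ ≤ ∑ k, |D (EuclideanSpace.single k 1)| := by
  refine D.opNorm_le_bound (by positivity) fun v => ?_
  conv_lhs => rw [← (EuclideanSpace.basisFun ι ℝ).sum_repr v]
  rw [map_sum, Finset.sum_mul]
  refine (norm_sum_le _ _).trans (Finset.sum_le_sum fun k _ => ?_)
  rw [map_smul, norm_smul, EuclideanSpace.basisFun_apply, EuclideanSpace.basisFun_repr,
    Real.norm_eq_abs, mul_comm]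
  exact mul_le_mul_of_nonneg_left (PiLp.norm_apply_le v k) (abs_nonneg _)

lemma sum_fin_two_of_ne {M : Type*} [AddCommMonoid M] {i j : Fin 2} (hij : i ≠ j)
    (f : Fin 2 → M) : ∑ k, f k = f i + f j := by
  rw [← Finset.sum_pair hij, Finset.eq_univ_of_card {i, j} (by rw [Finset.card_pair hij]; rfl)]

def ψ (u : ℝ) : ℝ := √(-log (u / 4))

def ψ' (u : ℝ) : ℝ := -(2 * u * ψ u)⁻¹

def ψ'' (u : ℝ) : ℝ := (2 * ψ u + 2 * u * ψ' u) / (2 * u * ψ u) ^ 2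

section Profile

variable {u : ℝ}

lemma neg_log_div_four_pos (h0 : 0 < u) (h4 : u < 4) : 0 < -log (u / 4) :=
  neg_pos.2 (log_neg (by positivity) (by linarith))

lemma ψ_pos (h0 : 0 < u) (h4 : u < 4) : 0 < ψ u :=
  sqrt_pos.2 (neg_log_div_four_pos h0 h4)

lemma half_le_ψ_sq (h0 : 0 < u) (h2 : u ≤ 2) : 1 / 2 ≤ ψ u ^ 2 := by
  rw [ψ, sq_sqrt (neg_log_div_four_pos h0 (by linarith)).le]
  have : log (u / 4) ≤ log (1 / 2) := log_le_log (by positivity) (by linarith)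
  rw [one_div, log_inv] at this
  linarith [log_two_gt_d9]

lemma mul_abs_ψ'_le (h0 : 0 < u) (h2 : u ≤ 2) : u * |ψ' u| ≤ ψ u := by
  have hψ := ψ_pos h0 (by linarith)
  rw [ψ', abs_neg, abs_inv, abs_of_pos (by positivity), ← div_eq_mul_inv,
    div_le_iff₀ (by positivity)]
  nlinarith [half_le_ψ_sq h0 h2]

lemma sq_mul_abs_ψ''_le (h0 : 0 < u) (h2 : u ≤ 2) : u ^ 2 * |ψ'' u| ≤ 2 * ψ u := by
  have hψ := ψ_pos h0 (by linarith)
  have hψ2 := half_le_ψ_sq h0 h2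
  have hnum : |2 * ψ u + 2 * u * ψ' u| ≤ 4 * ψ u := by
    have := mul_abs_ψ'_le h0 h2
    calc |2 * ψ u + 2 * u * ψ' u| ≤ |2 * ψ u| + |2 * u * ψ' u| := abs_add_le _ _
      _ = 2 * ψ u + 2 * (u * |ψ' u|) := by
        rw [abs_of_pos (by positivity), abs_mul, abs_mul, abs_two, abs_of_pos h0]; ring
      _ ≤ 4 * ψ u := by linarith
  rw [ψ'', abs_div, abs_of_pos (by positivity : 0 < (2 * u * ψ u) ^ 2), mul_div_assoc',
    div_le_iff₀ (by positivity)]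
  nlinarith [mul_le_mul_of_nonneg_left hnum (sq_nonneg u)]

lemma hasDerivAt_ψ (h0 : 0 < u) (h4 : u < 4) : HasDerivAt ψ (ψ' u) u := by
  have hlog := ((hasDerivAt_id u).div_const 4).log (by positivity)
  convert (hlog.neg).sqrt (neg_log_div_four_pos h0 h4).ne' using 1
  · rfl
  · simp only [ψ', ψ, id, Pi.neg_apply]
    field_simp

lemma hasDerivAt_ψ' (h0 : 0 < u) (h4 : u < 4) : HasDerivAt ψ' (ψ'' u) u := by
  have hψ := ψ_pos h0 h4
  have hden : HasDerivAt (fun v => 2 * v * ψ v) (2 * ψ u + 2 * u * ψ' u) u := by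
    refine (((hasDerivAt_id' u).const_mul 2).fun_mul (hasDerivAt_ψ h0 h4)).congr_deriv ?_
    ring
  refine (hden.fun_inv (by positivity)).neg.congr_deriv ?_
  rw [ψ'']
  ring

lemma contDiffAt_ψ (h0 : 0 < u) (h4 : u < 4) {n : WithTop ℕ∞} : ContDiffAt ℝ n ψ u :=
  ((contDiffAt_log.2 (by positivity)).comp u (contDiffAt_id.div_const 4)).neg.sqrt
    (neg_log_div_four_pos h0 h4).ne'

lemma contDiffAt_ψ' (h0 : 0 < u) (h4 : u < 4) {n : WithTop ℕ∞} : ContDiffAt ℝ n ψ' u := by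
  have hψ := ψ_pos h0 h4
  exact (((contDiffAt_const.mul contDiffAt_id).mul (contDiffAt_ψ h0 h4)).inv
    (by positivity)).neg

lemma ψ_le_of_sq_le {c : ℝ} (hc : 0 < c) (hcu : c ^ 2 ≤ u) :
    ψ u ≤ √2 * √(-log (c / 2)) := by
  rw [ψ, ← sqrt_mul zero_le_two]
  refine sqrt_le_sqrt ?_
  have : log ((c / 2) ^ 2) ≤ log (u / 4) := log_le_log (by positivity) (by nlinarith)
  rw [log_pow] at this
  push_cast at this
  linarith

end Profile

def F (a b : ℝ) : ℝ := a * b * ψ (a ^ 2 + b ^ 2)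

def Fa (a b : ℝ) : ℝ := b * ψ (a ^ 2 + b ^ 2) + 2 * a ^ 2 * b * ψ' (a ^ 2 + b ^ 2)

def Faa (a b : ℝ) : ℝ := 6 * a * b * ψ' (a ^ 2 + b ^ 2) + 4 * a ^ 3 * b * ψ'' (a ^ 2 + b ^ 2)

def Fab (a b : ℝ) : ℝ :=
  ψ (a ^ 2 + b ^ 2) + 2 * (a ^ 2 + b ^ 2) * ψ' (a ^ 2 + b ^ 2) +
    4 * a ^ 2 * b ^ 2 * ψ'' (a ^ 2 + b ^ 2)

lemma F_comm (a b : ℝ) : F a b = F b a := by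
  rw [F, F, add_comm (a ^ 2), mul_comm a]

section Partials

variable {a b : ℝ}

lemma hasDerivAt_comp_sq_add_sq_fst {g : ℝ → ℝ} {g' : ℝ} (hg : HasDerivAt g g' (a ^ 2 + b ^ 2)) :
    HasDerivAt (fun a => g (a ^ 2 + b ^ 2)) (g' * (2 * a)) a :=
  (hg.comp a ((hasDerivAt_pow 2 a).add_const (b ^ 2))).congr_deriv (by simp)

lemma hasDerivAt_comp_sq_add_sq_snd {g : ℝ → ℝ} {g' : ℝ} (hg : HasDerivAt g g' (a ^ 2 + b ^ 2)) :
    HasDerivAt (fun b => g (a ^ 2 + b ^ 2)) (g' * (2 * b)) b :=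
  (hg.comp b ((hasDerivAt_pow 2 b).const_add (a ^ 2))).congr_deriv (by simp)

lemma hasDerivAt_F_fst (h0 : 0 < a ^ 2 + b ^ 2) (h4 : a ^ 2 + b ^ 2 < 4) :
    HasDerivAt (fun a => F a b) (Fa a b) a :=
  (((hasDerivAt_id' a).mul_const b).fun_mul
    (hasDerivAt_comp_sq_add_sq_fst (hasDerivAt_ψ h0 h4))).congr_deriv (by rw [Fa]; ring)

lemma hasDerivAt_Fa_fst (h0 : 0 < a ^ 2 + b ^ 2) (h4 : a ^ 2 + b ^ 2 < 4) :
    HasDerivAt (fun a => Fa a b) (Faa a b) a := by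
  have hψ := hasDerivAt_comp_sq_add_sq_fst (hasDerivAt_ψ h0 h4)
  have hψ' := hasDerivAt_comp_sq_add_sq_fst (hasDerivAt_ψ' h0 h4)
  exact ((hψ.const_mul b).fun_add (((hasDerivAt_pow 2 a).const_mul 2).mul_const b
    |>.fun_mul hψ')).congr_deriv (by rw [Faa]; ring)

lemma hasDerivAt_Fa_snd (h0 : 0 < a ^ 2 + b ^ 2) (h4 : a ^ 2 + b ^ 2 < 4) :
    HasDerivAt (fun b => Fa a b) (Fab a b) b := by
  have hψ := hasDerivAt_comp_sq_add_sq_snd (hasDerivAt_ψ h0 h4)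
  have hψ' := hasDerivAt_comp_sq_add_sq_snd (hasDerivAt_ψ' h0 h4)
  exact (((hasDerivAt_id' b).fun_mul hψ).fun_add
    (((hasDerivAt_id' b).const_mul (2 * a ^ 2)).fun_mul hψ')).congr_deriv (by rw [Fab]; ring)

lemma abs_Fa_le (h0 : 0 < a ^ 2 + b ^ 2) (h2 : a ^ 2 + b ^ 2 ≤ 2) :
    |Fa a b| ≤ 3 * |b| * ψ (a ^ 2 + b ^ 2) := by
  have hψ' := mul_abs_ψ'_le h0 h2
  have ha : a ^ 2 * |ψ' (a ^ 2 + b ^ 2)| ≤ ψ (a ^ 2 + b ^ 2) :=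
    le_trans (by gcongr; nlinarith) hψ'
  have hψ := (ψ_pos h0 (by linarith)).le
  calc |Fa a b| = |b| * |ψ (a ^ 2 + b ^ 2) + 2 * a ^ 2 * ψ' (a ^ 2 + b ^ 2)| := by
        rw [Fa, ← abs_mul]; ring_nf
    _ ≤ |b| * (ψ (a ^ 2 + b ^ 2) + 2 * a ^ 2 * |ψ' (a ^ 2 + b ^ 2)|) := by
        gcongr
        refine (abs_add_le _ _).trans_eq ?_
        rw [abs_of_nonneg hψ, abs_mul, abs_mul, abs_two, abs_of_nonneg (sq_nonneg a)]
    _ ≤ 3 * |b| * ψ (a ^ 2 + b ^ 2) := by nlinarith [abs_nonneg b]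

lemma abs_Faa_le (h0 : 0 < a ^ 2 + b ^ 2) (h2 : a ^ 2 + b ^ 2 ≤ 2) :
    |Faa a b| ≤ 7 * ψ (a ^ 2 + b ^ 2) := by
  set u := a ^ 2 + b ^ 2 with hu
  have hψ' := mul_abs_ψ'_le h0 h2
  have hψ'' := sq_mul_abs_ψ''_le h0 h2
  have hab : 2 * |a * b| ≤ u := by
    rw [abs_mul]; nlinarith [sq_abs a, sq_abs b, sq_nonneg (|a| - |b|)]
  have ha : a ^ 2 ≤ u := le_add_of_nonneg_right (sq_nonneg b)
  calc |Faa a b| ≤ 6 * |a * b| * |ψ' u| + 4 * a ^ 2 * |a * b| * |ψ'' u| := by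
        rw [Faa, ← hu, show 4 * a ^ 3 * b = 4 * a ^ 2 * (a * b) by ring]
        refine (abs_add_le _ _).trans_eq ?_
        simp only [abs_mul, abs_of_pos (by norm_num : (0 : ℝ) < 6),
          abs_of_pos (by norm_num : (0 : ℝ) < 4), abs_of_nonneg (sq_nonneg a)]
        ring
    _ ≤ 3 * (u * |ψ' u|) + 2 * (u ^ 2 * |ψ'' u|) := by
        have h1 := mul_le_mul_of_nonneg_right hab (abs_nonneg (ψ' u))
        have h2 := mul_le_mul_of_nonneg_right (mul_le_mul ha hab (by positivity) h0.le)
          (abs_nonneg (ψ'' u))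
        nlinarith
    _ ≤ 7 * ψ u := by linarith

lemma abs_Fab_le (h0 : 0 < a ^ 2 + b ^ 2) (h2 : a ^ 2 + b ^ 2 ≤ 2) :
    |Fab a b| ≤ 5 * ψ (a ^ 2 + b ^ 2) := by
  set u := a ^ 2 + b ^ 2
  have hψ' := mul_abs_ψ'_le h0 h2
  have hψ'' := sq_mul_abs_ψ''_le h0 h2
  have hψ := (ψ_pos h0 (by linarith)).le
  have hab : 4 * (a ^ 2 * b ^ 2) ≤ u ^ 2 := by nlinarith [sq_nonneg (a ^ 2 - b ^ 2)]
  calc |Fab a b| ≤ ψ u + 2 * (u * |ψ' u|) + 4 * (a ^ 2 * b ^ 2) * |ψ'' u| := by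
        refine (abs_add_le _ _).trans (add_le_add ((abs_add_le _ _).trans_eq ?_) ?_)
        · rw [abs_of_nonneg hψ, abs_mul, abs_mul, abs_two, abs_of_pos h0]; ring
        · rw [abs_mul, abs_of_nonneg (by positivity)]; ring_nf; rfl
    _ ≤ ψ u + 2 * (u * |ψ' u|) + u ^ 2 * |ψ'' u| := by gcongr
    _ ≤ 5 * ψ u := by linarith

end Partials

section Smoothness

variable {E : Type*} [NormedAddCommGroup E] [NormedSpace ℝ E] {f g : E → ℝ} {x : E}
  {n : WithTop ℕ∞}

lemma contDiffAt_comp_sq_add_sq {φ : ℝ → ℝ} (hφ : ContDiffAt ℝ n φ (f x ^ 2 + g x ^ 2))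
    (hf : ContDiffAt ℝ n f x) (hg : ContDiffAt ℝ n g x) :
    ContDiffAt ℝ n (fun z => φ (f z ^ 2 + g z ^ 2)) x :=
  hφ.comp (f := fun z => f z ^ 2 + g z ^ 2) x ((hf.pow 2).add (hg.pow 2))

lemma contDiffAt_F_comp (hf : ContDiffAt ℝ n f x) (hg : ContDiffAt ℝ n g x)
    (h0 : 0 < f x ^ 2 + g x ^ 2) (h4 : f x ^ 2 + g x ^ 2 < 4) :
    ContDiffAt ℝ n (fun z => F (f z) (g z)) x :=
  (hf.mul hg).mul (contDiffAt_comp_sq_add_sq (contDiffAt_ψ h0 h4) hf hg)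

lemma contDiffAt_Fa_comp (hf : ContDiffAt ℝ n f x) (hg : ContDiffAt ℝ n g x)
    (h0 : 0 < f x ^ 2 + g x ^ 2) (h4 : f x ^ 2 + g x ^ 2 < 4) :
    ContDiffAt ℝ n (fun z => Fa (f z) (g z)) x :=
  (hg.mul (contDiffAt_comp_sq_add_sq (contDiffAt_ψ h0 h4) hf hg)).add
    (((contDiffAt_const.mul (hf.pow 2)).mul hg).mul
      (contDiffAt_comp_sq_add_sq (contDiffAt_ψ' h0 h4) hf hg))

end Smoothness

def sn (t : ℝ) : ℝ := sin (2 * π * t)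

def sn' (t : ℝ) : ℝ := 2 * π * cos (2 * π * t)

def sn'' (t : ℝ) : ℝ := -(2 * π) ^ 2 * sin (2 * π * t)

lemma hasDerivAt_sn (t : ℝ) : HasDerivAt sn (sn' t) t :=
  (((hasDerivAt_id' t).const_mul (2 * π)).sin).congr_deriv (by rw [sn']; ring)

lemma hasDerivAt_sn' (t : ℝ) : HasDerivAt sn' (sn'' t) t :=
  ((((hasDerivAt_id' t).const_mul (2 * π)).cos).const_mul (2 * π)).congr_deriv
    (by rw [sn'']; ring)

lemma contDiff_sn {n : WithTop ℕ∞} : ContDiff ℝ n sn :=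
  (contDiff_const.mul contDiff_id).sin

lemma contDiff_sn' {n : WithTop ℕ∞} : ContDiff ℝ n sn' :=
  contDiff_const.mul (contDiff_const.mul contDiff_id).cos

lemma abs_sn_le_one (t : ℝ) : |sn t| ≤ 1 := abs_sin_le_one _

lemma abs_sn'_le (t : ℝ) : |sn' t| ≤ 2 * π := by
  rw [sn', abs_mul, abs_of_pos (by positivity)]
  exact mul_le_of_le_one_right (by positivity) (abs_cos_le_one _)

lemma abs_sn''_le (t : ℝ) : |sn'' t| ≤ (2 * π) ^ 2 := by
  rw [sn'', abs_mul, abs_neg, abs_of_pos (by positivity)]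
  exact mul_le_of_le_one_right (by positivity) (abs_sin_le_one _)

lemma abs_sn_sub_sn_le (s t : ℝ) : |sn s - sn t| ≤ 2 * π * |s - t| := by
  refine (abs_sin_sub_sin_le _ _).trans_eq ?_
  rw [← mul_sub, abs_mul, abs_of_pos (by positivity)]

lemma sn_sq_add_sn_sq_le_two (s t : ℝ) : sn s ^ 2 + sn t ^ 2 ≤ 2 := by
  unfold sn
  linarith [sin_sq_le_one (2 * π * s), sin_sq_le_one (2 * π * t)]

lemma sn_sq_add_sn_sq_lt_four (s t : ℝ) : sn s ^ 2 + sn t ^ 2 < 4 :=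
  (sn_sq_add_sn_sq_le_two s t).trans_lt (by norm_num)

lemma sn_eq_zero_iff {t : ℝ} : sn t = 0 ↔ ∃ k : ℤ, t = k / 2 := by
  rw [sn, sin_eq_zero_iff]
  refine exists_congr fun k => ⟨fun h => ?_, fun h => by rw [h]; ring⟩
  field_simp
  linarith [mul_right_cancel₀ pi_ne_zero (h.trans (by ring) : (k : ℝ) * π = 2 * t * π)]

section Plane

variable {i j : Fin 2} {x : E2} {n : WithTop ℕ∞}

/-- `∂ᵢ modH`, with `j` the other coordinate index. -/
def dH (i j : Fin 2) (x : E2) : ℝ := sn' (x i) * Fa (sn (x i)) (sn (x j))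

def sinMax (x : E2) : ℝ := max |sn (x 0)| |sn (x 1)|

lemma mem_halfLattice_iff : x ∈ halfLattice ↔ sn (x 0) = 0 ∧ sn (x 1) = 0 := by
  simp [halfLattice, sn_eq_zero_iff]

lemma sinMax_pos_iff : 0 < sinMax x ↔ x ∉ halfLattice := by
  simp only [sinMax, lt_max_iff, abs_pos, mem_halfLattice_iff, not_and_or]

lemma sinMax_sq_le (hij : i ≠ j) (x : E2) : sinMax x ^ 2 ≤ sn (x i) ^ 2 + sn (x j) ^ 2 := by
  fin_cases i <;> fin_cases j <;> simp only [ne_eq, not_true_eq_false] at hij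
  · exact max_abs_sq_le _ _
  · simpa [sinMax, max_comm, add_comm] using max_abs_sq_le (sn (x 1)) (sn (x 0))

lemma sq_add_sq_sn_pos (hij : i ≠ j) (hx : x ∉ halfLattice) :
    0 < sn (x i) ^ 2 + sn (x j) ^ 2 :=
  (pow_pos (sinMax_pos_iff.2 hx) 2).trans_le (sinMax_sq_le hij x)

lemma modH_eq_F (hij : i ≠ j) (x : E2) : modH x = F (sn (x i)) (sn (x j)) := by
  fin_cases i <;> fin_cases j <;> simp only [ne_eq, not_true_eq_false] at hij
  · rfl
  · exact F_comm _ _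

lemma contDiffAt_sn_apply (i : Fin 2) : ContDiffAt ℝ n (fun z : E2 => sn (z i)) x :=
  (contDiff_sn.comp (EuclideanSpace.proj i : E2 →L[ℝ] ℝ).contDiff).contDiffAt

lemma contDiffAt_modH (hx : x ∉ halfLattice) : ContDiffAt ℝ n modH x :=
  contDiffAt_F_comp (contDiffAt_sn_apply 0) (contDiffAt_sn_apply 1)
    (sq_add_sq_sn_pos zero_ne_one hx) (sn_sq_add_sn_sq_lt_four _ _)

lemma contDiffAt_dH (hij : i ≠ j) (hx : x ∉ halfLattice) : ContDiffAt ℝ n (dH i j) x :=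
  (contDiff_sn'.comp (EuclideanSpace.proj i : E2 →L[ℝ] ℝ).contDiff).contDiffAt.mul
    (contDiffAt_Fa_comp (contDiffAt_sn_apply i) (contDiffAt_sn_apply j)
      (sq_add_sq_sn_pos hij hx) (sn_sq_add_sn_sq_lt_four _ _))

lemma add_smul_single_apply_self (x : E2) (i : Fin 2) (t : ℝ) :
    (x + t • EuclideanSpace.single i 1 : E2) i = x i + t := by
  simp

lemma add_smul_single_apply_of_ne (hij : i ≠ j) (x : E2) (t : ℝ) :
    (x + t • EuclideanSpace.single i 1 : E2) j = x j := by
  simp [hij.symm]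

lemma fderiv_modH_single (hij : i ≠ j) (hx : x ∉ halfLattice) :
    fderiv ℝ modH x (EuclideanSpace.single i 1) = dH i j x := by
  refine fderiv_apply_single_eq (g := fun s => F (sn s) (sn (x j)))
    ((contDiffAt_modH hx).differentiableAt one_ne_zero) (fun t => ?_) ?_
  · rw [modH_eq_F hij, add_smul_single_apply_self, add_smul_single_apply_of_ne hij]
  · exact ((hasDerivAt_F_fst (sq_add_sq_sn_pos hij hx) (sn_sq_add_sn_sq_lt_four _ _)).comp
      (x i) (hasDerivAt_sn (x i))).congr_deriv (mul_comm _ _)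

lemma fderiv_dH_single_self (hij : i ≠ j) (hx : x ∉ halfLattice) :
    fderiv ℝ (dH i j) x (EuclideanSpace.single i 1) =
      sn'' (x i) * Fa (sn (x i)) (sn (x j)) + sn' (x i) ^ 2 * Faa (sn (x i)) (sn (x j)) := by
  refine fderiv_apply_single_eq (g := fun s => sn' s * Fa (sn s) (sn (x j)))
    ((contDiffAt_dH hij hx).differentiableAt one_ne_zero) (fun t => ?_) ?_
  · rw [dH, add_smul_single_apply_self, add_smul_single_apply_of_ne hij]
  · exact ((hasDerivAt_sn' (x i)).fun_mul ((hasDerivAt_Fa_fst (sq_add_sq_sn_pos hij hx)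
      (sn_sq_add_sn_sq_lt_four _ _)).comp (x i) (hasDerivAt_sn (x i)))).congr_deriv
      (by rw [Function.comp_apply]; ring)

lemma fderiv_dH_single_other (hij : i ≠ j) (hx : x ∉ halfLattice) :
    fderiv ℝ (dH i j) x (EuclideanSpace.single j 1) =
      sn' (x i) * sn' (x j) * Fab (sn (x i)) (sn (x j)) := by
  refine fderiv_apply_single_eq (g := fun s => sn' (x i) * Fa (sn (x i)) (sn s))
    ((contDiffAt_dH hij hx).differentiableAt one_ne_zero) (fun t => ?_) ?_
  · rw [dH, add_smul_single_apply_self, add_smul_single_apply_of_ne hij.symm]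
  · exact (((hasDerivAt_Fa_snd (sq_add_sq_sn_pos hij hx) (sn_sq_add_sn_sq_lt_four _ _)).comp
      (x j) (hasDerivAt_sn (x j))).const_mul (sn' (x i))).congr_deriv (by ring)

lemma abs_dH_le (hij : i ≠ j) (hx : x ∉ halfLattice) :
    |dH i j x| ≤ 6 * π * |sn (x j)| * ψ (sn (x i) ^ 2 + sn (x j) ^ 2) := by
  have hFa := abs_Fa_le (sq_add_sq_sn_pos hij hx) (sn_sq_add_sn_sq_le_two (x i) (x j))
  rw [dH, abs_mul]
  calc |sn' (x i)| * |Fa (sn (x i)) (sn (x j))|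
      ≤ 2 * π * (3 * |sn (x j)| * ψ (sn (x i) ^ 2 + sn (x j) ^ 2)) :=
        mul_le_mul (abs_sn'_le _) hFa (abs_nonneg _) (by positivity)
    _ = 6 * π * |sn (x j)| * ψ (sn (x i) ^ 2 + sn (x j) ^ 2) := by ring

lemma abs_dH_le_log (hij : i ≠ j) (hx : x ∉ halfLattice) :
    |dH i j x| ≤ 6 * √2 * π * |sn (x j)| * √(-log (|sn (x j)| / 2)) := by
  rcases eq_or_ne (sn (x j)) 0 with hb | hb
  · simpa [hb] using abs_dH_le hij hx
  refine (abs_dH_le hij hx).trans ?_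
  have hψ := ψ_le_of_sq_le (abs_pos.2 hb)
    ((sq_abs _).trans_le (le_add_of_nonneg_left (sq_nonneg (sn (x i)))))
  calc 6 * π * |sn (x j)| * ψ (sn (x i) ^ 2 + sn (x j) ^ 2)
      ≤ 6 * π * |sn (x j)| * (√2 * √(-log (|sn (x j)| / 2))) := by gcongr
    _ = 6 * √2 * π * |sn (x j)| * √(-log (|sn (x j)| / 2)) := by ring

lemma norm_fderiv_dH_le (hij : i ≠ j) (hx : x ∉ halfLattice) :
    ‖fderiv ℝ (dH i j) x‖ ≤ 80 * π ^ 2 * ψ (sn (x i) ^ 2 + sn (x j) ^ 2) := by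
  set u := sn (x i) ^ 2 + sn (x j) ^ 2
  have h0 : 0 < u := sq_add_sq_sn_pos hij hx
  have h2 : u ≤ 2 := sn_sq_add_sn_sq_le_two _ _
  have hψ := ψ_pos h0 (by linarith)
  have hFa : |Fa (sn (x i)) (sn (x j))| ≤ 3 * ψ u := by
    have := abs_Fa_le h0 h2
    nlinarith [abs_sn_le_one (x j)]
  have hself : |fderiv ℝ (dH i j) x (EuclideanSpace.single i 1)| ≤ 40 * π ^ 2 * ψ u := by
    rw [fderiv_dH_single_self hij hx]
    refine (abs_add_le _ _).trans ?_
    rw [abs_mul, abs_mul, abs_pow]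
    have h1 := mul_le_mul (abs_sn''_le (x i)) hFa (abs_nonneg _) (by positivity)
    have h2 := mul_le_mul (pow_le_pow_left₀ (abs_nonneg _) (abs_sn'_le (x i)) 2)
      (abs_Faa_le h0 h2) (abs_nonneg _) (by positivity)
    nlinarith
  have hother : |fderiv ℝ (dH i j) x (EuclideanSpace.single j 1)| ≤ 40 * π ^ 2 * ψ u := by
    rw [fderiv_dH_single_other hij hx, abs_mul, abs_mul]
    have := mul_le_mul (mul_le_mul (abs_sn'_le (x i)) (abs_sn'_le (x j)) (abs_nonneg _)
      (by positivity)) (abs_Fab_le h0 h2) (abs_nonneg _) (by positivity)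
    nlinarith
  refine (opNorm_le_sum_abs_apply_single _).trans ?_
  rw [sum_fin_two_of_ne hij]
  linarith

lemma abs_sinMax_sub_le (x y : E2) : |sinMax x - sinMax y| ≤ 2 * π * ‖x - y‖ := by
  have hcoord (k : Fin 2) : |(|sn (x k)| - |sn (y k)|)| ≤ 2 * π * ‖x - y‖ :=
    (abs_abs_sub_abs_le_abs_sub _ _).trans <| (abs_sn_sub_sn_le _ _).trans <| by
      gcongr
      exact PiLp.norm_apply_le (x - y) k
  exact (abs_max_sub_max_le_max _ _ _ _).trans (max_le (hcoord 0) (hcoord 1))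

lemma sinMax_nonneg (x : E2) : 0 ≤ sinMax x := (abs_nonneg _).trans (le_max_left _ _)

lemma abs_dH_le_sinMax (hij : i ≠ j) (hx : x ∉ halfLattice) :
    |dH i j x| ≤ 6 * √2 * π * (sinMax x * √(-log (sinMax x / 2))) := by
  have hj : |sn (x j)| ≤ sinMax x := by
    fin_cases j
    · exact le_max_left _ _
    · exact le_max_right _ _
  have hψ := ψ_le_of_sq_le (sinMax_pos_iff.2 hx) (sinMax_sq_le hij x)
  calc |dH i j x| ≤ 6 * π * |sn (x j)| * ψ (sn (x i) ^ 2 + sn (x j) ^ 2) := abs_dH_le hij hx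
    _ ≤ 6 * π * sinMax x * (√2 * √(-log (sinMax x / 2))) := by
        have := sinMax_nonneg x
        have := ψ_pos (sq_add_sq_sn_pos hij hx) (sn_sq_add_sn_sq_lt_four _ _)
        gcongr
    _ = 6 * √2 * π * (sinMax x * √(-log (sinMax x / 2))) := by ring

lemma modV_eq (hx : x ∉ halfLattice) : modV x = WithLp.toLp 2 ![-dH 1 0 x, dH 0 1 x] := by
  rw [modV, if_neg hx, fderiv_modH_single one_ne_zero hx, fderiv_modH_single zero_ne_one hx]

lemma contDiffOn_modV : ContDiffOn ℝ (⊤ : ℕ∞) modV halfLatticeᶜ := by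
  intro x hx
  have hW : ContDiffAt ℝ (⊤ : ℕ∞) (fun z : E2 => WithLp.toLp 2 ![-dH 1 0 z, dH 0 1 z]) x := by
    refine (contDiffAt_piLp 2).2 fun k => ?_
    fin_cases k
    · exact (contDiffAt_dH one_ne_zero hx).neg
    · exact contDiffAt_dH zero_ne_one hx
  exact hW.contDiffWithinAt.congr (fun z hz => modV_eq hz) (modV_eq hx)

lemma norm_modV_le (x : E2) :
    ‖modV x‖ ≤ 12 * √2 * π * (sinMax x * √(-log (sinMax x / 2))) := by
  by_cases hx : x ∈ halfLattice
  · rw [modV, if_pos hx, norm_zero]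
    have := sinMax_nonneg x
    positivity
  refine (norm_le_sum_abs_apply _).trans ?_
  rw [Fin.sum_univ_two, modV_eq hx]
  simp only [Matrix.cons_val_zero, Matrix.cons_val_one, abs_neg]
  linarith [abs_dH_le_sinMax one_ne_zero hx, abs_dH_le_sinMax zero_ne_one hx]

section LogLipschitz

variable {x y : E2}

lemma two_mul_norm_le_sinMax_of_mem_segment (hfar : 4 * π * ‖x - y‖ ≤ sinMax x) {z : E2}
    (hz : z ∈ segment ℝ x y) : 2 * ‖x - y‖ ≤ sinMax z := by
  have hzx : ‖x - z‖ ≤ ‖x - y‖ := by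
    rw [norm_sub_rev x z, norm_sub_rev x y]
    exact norm_sub_le_of_mem_segment hz
  have := (abs_le.1 (abs_sinMax_sub_le x z)).2
  nlinarith [pi_gt_three, norm_nonneg (x - y)]

lemma abs_dH_sub_le_of_far (hij : i ≠ j) (hpos : 0 < ‖x - y‖)
    (hfar : 4 * π * ‖x - y‖ ≤ sinMax x) :
    |dH i j x - dH i j y| ≤ 80 * √2 * π ^ 2 * (‖x - y‖ * √(-log ‖x - y‖)) := by
  have hsinMax z (hz : z ∈ segment ℝ x y) := two_mul_norm_le_sinMax_of_mem_segment hfar hz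
  have hL z (hz : z ∈ segment ℝ x y) : z ∉ halfLattice :=
    sinMax_pos_iff.1 (by linarith [hsinMax z hz])
  have hD z (hz : z ∈ segment ℝ x y) :
      ‖fderiv ℝ (dH i j) z‖ ≤ 80 * √2 * π ^ 2 * √(-log ‖x - y‖) := by
    have hψ := ψ_le_of_sq_le (by positivity : 0 < 2 * ‖x - y‖)
      ((pow_le_pow_left₀ (by positivity) (hsinMax z hz) 2).trans (sinMax_sq_le hij z))
    rw [mul_div_cancel_left₀ _ two_ne_zero] at hψ
    calc ‖fderiv ℝ (dH i j) z‖ ≤ 80 * π ^ 2 * ψ (sn (z i) ^ 2 + sn (z j) ^ 2) :=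
          norm_fderiv_dH_le hij (hL z hz)
      _ ≤ 80 * π ^ 2 * (√2 * √(-log ‖x - y‖)) := by gcongr
      _ = 80 * √2 * π ^ 2 * √(-log ‖x - y‖) := by ring
  have := (convex_segment x y).norm_image_sub_le_of_norm_fderiv_le
    (fun z hz => ((contDiffAt_dH hij (hL z hz)).differentiableAt one_ne_zero)) hD
    (right_mem_segment ℝ x y) (left_mem_segment ℝ x y)
  rw [Real.norm_eq_abs] at this
  linarith

lemma norm_modV_sub_le_of_far (hpos : 0 < ‖x - y‖) (hfar : 4 * π * ‖x - y‖ ≤ sinMax x) :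
    ‖modV x - modV y‖ ≤ 160 * √2 * π ^ 2 * (‖x - y‖ * √(-log ‖x - y‖)) := by
  have hL z (hz : z ∈ segment ℝ x y) : z ∉ halfLattice := sinMax_pos_iff.1
    (by linarith [two_mul_norm_le_sinMax_of_mem_segment hfar hz])
  refine (norm_le_sum_abs_apply _).trans ?_
  rw [Fin.sum_univ_two, modV_eq (hL x (left_mem_segment ℝ x y)),
    modV_eq (hL y (right_mem_segment ℝ x y))]
  simp only [PiLp.sub_apply, Matrix.cons_val_zero, Matrix.cons_val_one, neg_sub_neg,
    abs_sub_comm (dH 1 0 y)]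
  linarith [abs_dH_sub_le_of_far one_ne_zero hpos hfar, abs_dH_sub_le_of_far zero_ne_one hpos hfar]

lemma norm_modV_sub_le_of_near (hpos : 0 < ‖x - y‖) (hh : ‖x - y‖ ≤ 1 / 2)
    (hnear : sinMax x ≤ 4 * π * ‖x - y‖) :
    ‖modV x - modV y‖ ≤ 432 * √2 * π ^ 2 * (‖x - y‖ * √(-log ‖x - y‖)) := by
  have hK : 2 ≤ 6 * π := by linarith [pi_gt_three]
  have hx := mul_sqrt_neg_log_le (sinMax_nonneg x) hK (by nlinarith [pi_pos]) hpos hh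
  have hy := mul_sqrt_neg_log_le (sinMax_nonneg y) hK
    (by linarith [(abs_le.1 (abs_sinMax_sub_le x y)).1]) hpos hh
  calc ‖modV x - modV y‖ ≤ ‖modV x‖ + ‖modV y‖ := norm_sub_le _ _
    _ ≤ 12 * √2 * π * (3 * (6 * π) * (‖x - y‖ * √(-log ‖x - y‖))) +
        12 * √2 * π * (3 * (6 * π) * (‖x - y‖ * √(-log ‖x - y‖))) := by
      gcongr
      · exact (norm_modV_le x).trans (by gcongr)
      · exact (norm_modV_le y).trans (by gcongr)
    _ = 432 * √2 * π ^ 2 * (‖x - y‖ * √(-log ‖x - y‖)) := by ring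

lemma norm_modV_sub_le (hpos : 0 < ‖x - y‖) (hh : ‖x - y‖ ≤ 1 / 2) :
    ‖modV x - modV y‖ ≤ 432 * √2 * π ^ 2 * (‖x - y‖ * √(-log ‖x - y‖)) := by
  rcases le_total (4 * π * ‖x - y‖) (sinMax x) with hfar | hnear
  · refine (norm_modV_sub_le_of_far hpos hfar).trans ?_
    gcongr
    norm_num
  · exact norm_modV_sub_le_of_near hpos hh hnear

end LogLipschitz

end Plane

end ModifiedCellularFlow

open ModifiedCellularFlow

/-- Remark 1.2. The modified cellular flow is `C^∞` away from
`(½ℤ)²`, its stream function satisfies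
`|H_{x₁}| ≤ C·|sin(2πx₂)|·√(−log(|sin(2πx₂)|/2))` (and symmetrically for `H_{x₂}`),
and `V` is `½`-log-Lipschitz on `ℝ²`. -/
theorem statement19 :
    ContDiffOn ℝ (⊤ : ℕ∞) modV halfLatticeᶜ ∧
    (∃ C : ℝ, 0 < C ∧ ∀ x : E2, x ∉ halfLattice →
      |fderiv ℝ modH x (EuclideanSpace.single 0 1)| ≤
        C * |Real.sin (2 * Real.pi * x 1)| *
          Real.sqrt (- Real.log (|Real.sin (2 * Real.pi * x 1)| / 2)) ∧
      |fderiv ℝ modH x (EuclideanSpace.single 1 1)| ≤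
        C * |Real.sin (2 * Real.pi * x 0)| *
          Real.sqrt (- Real.log (|Real.sin (2 * Real.pi * x 0)| / 2))) ∧
    (∃ C' : ℝ, 0 < C' ∧ ∀ x y : E2, 0 < ‖x - y‖ → ‖x - y‖ ≤ 1 / 2 →
      ‖modV x - modV y‖ ≤ C' * ‖x - y‖ * (- Real.log ‖x - y‖) ^ ((1:ℝ)/2)) := by
  refine ⟨contDiffOn_modV, ⟨6 * √2 * Real.pi, by positivity, fun x hx => ⟨?_, ?_⟩⟩,
    ⟨432 * √2 * Real.pi ^ 2, by positivity, fun x y hpos hh => ?_⟩⟩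
  · rw [fderiv_modH_single zero_ne_one hx]
    exact abs_dH_le_log zero_ne_one hx
  · rw [fderiv_modH_single one_ne_zero hx]
    exact abs_dH_le_log one_ne_zero hx
  · rw [← Real.sqrt_eq_rpow, mul_assoc]
    exact norm_modV_sub_le hpos hh

end
end
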